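/- arXiv:1602.01149 — 15 statements merged into one kernel-verified Lean document; each statement's English description precedes it below -/
import Mathlib

section
/- Suppose there exist a set A in the family 𝔄 and a receiver i such that K_i ⊆ A and W_i \ A ≠ ∅. Then no weakly-secure index code (deterministic or random) exists: for every length ℓ, every finite key alphabet Y with key pmf p, and every random index code f that is decodable for receiver (K_i, W_i), the security condition fails at (A, j) for every j ∈ W_i \ A. -/
open Matrix

/-- Decodability of a random index code `f` for a receiver with knowledge set `K`
and want set `W`. -/
def Decodable {m ℓ : ℕ} {F Y : Type*} (f : (Fin m → F) → Y → (Fin ℓ → F))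
    (K W : Finset (Fin m)) : Prop :=
  ∃ g : (Fin ℓ → F) → (↥K → F) → (↥W → F),
    ∀ (x : Fin m → F) (y : Y), g (f x y) (fun j => x j.1) = fun j => x j.1

/-- Decodability of a deterministic index code. -/
def DetDecodable {m ℓ : ℕ} {F : Type*} (f : (Fin m → F) → (Fin ℓ → F))
    (K W : Finset (Fin m)) : Prop :=
  ∃ g : (Fin ℓ → F) → (↥K → F) → (↥W → F),
    ∀ x : Fin m → F, g (f x) (fun j => x j.1) = fun j => x j.1

/-- Security condition at `(A, i)` for a random index code with key pmf `p`
(counting form of `H(X_i | f(X,Y), X_A) = H(X_i)`). -/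
def Secure {m ℓ : ℕ} {F Y : Type*} [Fintype Y] (p : Y → NNReal)
    (f : (Fin m → F) → Y → (Fin ℓ → F)) (A : Finset (Fin m)) (i : Fin m) : Prop :=
  ∀ (c : Fin ℓ → F) (z : ↥A → F) (a b : F),
    (∑ y : Y, p y *
      (Nat.card {x : Fin m → F // f x y = c ∧ (∀ j : ↥A, x j.1 = z j) ∧ x i = a} : NNReal)) =
    (∑ y : Y, p y *
      (Nat.card {x : Fin m → F // f x y = c ∧ (∀ j : ↥A, x j.1 = z j) ∧ x i = b} : NNReal))

/-- Security condition at `(A, i)` for a deterministic index code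
(counting form of `H(X_i | f(X), X_A) = H(X_i)`). -/
def DetSecure {m ℓ : ℕ} {F : Type*} (f : (Fin m → F) → (Fin ℓ → F))
    (A : Finset (Fin m)) (i : Fin m) : Prop :=
  ∀ (c : Fin ℓ → F) (z : ↥A → F) (a b : F),
    Nat.card {x : Fin m → F // f x = c ∧ (∀ j : ↥A, x j.1 = z j) ∧ x i = a} =
    Nat.card {x : Fin m → F // f x = c ∧ (∀ j : ↥A, x j.1 = z j) ∧ x i = b}

/-!
Decodability makes `x j` (for `j ∈ W i`) a function of the codeword and of `x` on `K i ⊆ A`,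
so on each fibre `{x | f x y = c, x|_A = z}` it takes a single value. Security at `(A, j)`
would force every value of `x j`, in particular both `0` and `1`, to occur on the fibre of a
key of positive weight.
-/
theorem Decodable.apply_eq_of_eq_of_eqOn {m ℓ : ℕ} {F Y : Type*}
    {f : (Fin m → F) → Y → (Fin ℓ → F)} {K W : Finset (Fin m)} (hdec : Decodable f K W)
    {x x' : Fin m → F} {y y' : Y} (hf : f x y = f x' y') (hK : ∀ k ∈ K, x k = x' k)
    {j : Fin m} (hj : j ∈ W) : x j = x' j := by
  obtain ⟨g, hg⟩ := hdec
  have hrestrict : (fun k : ↥K => x k.1) = fun k => x' k.1 := funext fun k => hK k.1 k.2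
  calc x j = g (f x y) (fun k => x k.1) ⟨j, hj⟩ := (congrFun (hg x y) ⟨j, hj⟩).symm
    _ = g (f x' y') (fun k => x' k.1) ⟨j, hj⟩ := by rw [hf, hrestrict]
    _ = x' j := congrFun (hg x' y') ⟨j, hj⟩

theorem Secure.exists_apply_eq_of_ne_zero {m ℓ : ℕ} {F Y : Type*} [Finite F] [Fintype Y]
    {p : Y → NNReal} {f : (Fin m → F) → Y → (Fin ℓ → F)} {A : Finset (Fin m)} {i : Fin m}
    (hsec : Secure p f A i) {y₀ : Y} (hy₀ : p y₀ ≠ 0) (x₀ : Fin m → F) (b : F) :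
    ∃ y x, f x y = f x₀ y₀ ∧ (∀ k ∈ A, x k = x₀ k) ∧ x i = b := by
  by_contra! hnone
  have hfibre_pos : 0 < Nat.card {x : Fin m → F //
      f x y₀ = f x₀ y₀ ∧ (∀ k : ↥A, x k.1 = x₀ k.1) ∧ x i = x₀ i} :=
    Nat.card_pos_iff.mpr ⟨⟨⟨x₀, rfl, fun _ => rfl, rfl⟩⟩, inferInstance⟩
  have hempty : ∀ y, Nat.card {x : Fin m → F //
      f x y = f x₀ y₀ ∧ (∀ k : ↥A, x k.1 = x₀ k.1) ∧ x i = b} = 0 := fun y =>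
    Nat.card_eq_zero.mpr <| Or.inl ⟨fun ⟨x, hfx, hxA, hxi⟩ =>
      hnone y x hfx (fun k hk => hxA ⟨k, hk⟩) hxi⟩
  have hweight := hsec (f x₀ y₀) (fun k => x₀ k.1) (x₀ i) b
  simp only [hempty, Nat.cast_zero, mul_zero, Finset.sum_const_zero] at hweight
  have hterm := (Finset.sum_eq_zero_iff.mp hweight) y₀ (Finset.mem_univ y₀)
  exact (mul_ne_zero hy₀ (Nat.cast_ne_zero.mpr hfibre_pos.ne')) hterm

theorem no_secure_code_of_knowledge_subset_eavesdropper_general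
    (m n : ℕ) (K W : Fin n → Finset (Fin m))
    (A : Finset (Fin m))
    (i : Fin n) (hK : K i ⊆ A)
    (F : Type*) [Field F] [Fintype F]
    (ℓ : ℕ) (Y : Type*) [Fintype Y] (p : Y → NNReal) (hp : (∑ y : Y, p y) = 1)
    (f : (Fin m → F) → Y → (Fin ℓ → F))
    (hdec : Decodable f (K i) (W i)) :
    ∀ j ∈ W i \ A, ¬ Secure p f A j := by
  intro j hj hsec
  obtain ⟨y₀, -, hy₀⟩ := Finset.exists_ne_zero_of_sum_ne_zero (hp ▸ one_ne_zero)
  obtain ⟨y, x, hfx, hxA, hxj⟩ := hsec.exists_apply_eq_of_ne_zero hy₀ 0 1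
  have hx_j : x j = 0 :=
    hdec.apply_eq_of_eq_of_eqOn hfx (fun k hk => hxA k (hK hk)) (Finset.sdiff_subset hj)
  exact one_ne_zero (hxj.symm.trans hx_j)

/-- **Proposition 2.** If there are `A ∈ 𝔄` and a receiver `i` with `K i ⊆ A` and
`W i \ A ≠ ∅`, then no (deterministic or random) weakly-secure index code exists:
any random index code decodable for receiver `i` fails the security condition at
`(A, j)` for every `j ∈ W i \ A`. -/
theorem no_secure_code_of_knowledge_subset_eavesdropper
    (m n : ℕ) (K W : Fin n → Finset (Fin m))
    (𝔄 : Set (Finset (Fin m))) (A : Finset (Fin m)) (hA : A ∈ 𝔄)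
    (i : Fin n) (hK : K i ⊆ A) (hW : (W i \ A).Nonempty)
    (F : Type*) [Field F] [Fintype F]
    (ℓ : ℕ) (Y : Type*) [Fintype Y] (p : Y → NNReal) (hp : (∑ y : Y, p y) = 1)
    (f : (Fin m → F) → Y → (Fin ℓ → F))
    (hdec : Decodable f (K i) (W i)) :
    ∀ j ∈ W i \ A, ¬ Secure p f A j :=
  no_secure_code_of_knowledge_subset_eavesdropper_general m n K W A i hK F ℓ Y p hp f hdec
end

section
/- Let 0 ≤ t' < t ≤ m − 1. If a random index code f (with key pmf p) satisfies the security condition at (A, i) for every A ⊆ Fin m with |A| = t and every i ∉ A, then it also satisfies the security condition at (A', i) for every A' ⊆ Fin m with |A'| = t' and every i ∉ A'. (Any index code secure against an eavesdropper with t-level access is secure against an eavesdropper with t'-level access for all t' < t.) -/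
open Matrix

/-!
Knowing more side information can only be a stronger requirement: the count of messages
with side information `z` on `A` is the sum, over the possible values `v` of one further
coordinate `x j`, of the counts with side information `(z, v)` on `A ∪ {j}`. If each of
those does not depend on `x i`, neither does their sum. Every `A'` of size `t'` avoiding
`i` lies in some `A` of size `t` avoiding `i`, since `t ≤ m - 1`.
-/

theorem Nat.card_eq_sum_card_fiber {α β : Type*} [Finite α] [Fintype β]
    (R : α → Prop) (g : α → β) :
    Nat.card {x // R x} = ∑ b, Nat.card {x // R x ∧ g x = b} := by
  rw [← Nat.card_congr (Equiv.sigmaFiberEquiv fun x : {x // R x} => g x), Nat.card_sigma]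
  exact Finset.sum_congr rfl fun b _ =>
    Nat.card_congr (Equiv.subtypeSubtypeEquivSubtypeInter R (fun x => g x = b))

section InsertExtend

variable {α F : Type*} [DecidableEq α] {A : Finset α} {j : α}

def insertExtend (z : ↥A → F) (j : α) (v : F) : ↥(insert j A) → F :=
  fun k => if h : k.1 ∈ A then z ⟨k.1, h⟩ else v

theorem forall_eq_insertExtend_iff (hj : j ∉ A) (z : ↥A → F) (v : F) (x : α → F) :
    (∀ k : ↥(insert j A), x k = insertExtend z j v k) ↔ (∀ k : ↥A, x k = z k) ∧ x j = v := by
  constructor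
  · intro h
    refine ⟨fun k => ?_, ?_⟩
    · simpa [insertExtend, k.2] using h ⟨k, Finset.mem_insert_of_mem k.2⟩
    · simpa [insertExtend, hj] using h ⟨j, Finset.mem_insert_self j A⟩
  · rintro ⟨hA, rfl⟩ ⟨k, hk⟩
    by_cases hkA : k ∈ A
    · simpa [insertExtend, hkA] using hA ⟨k, hkA⟩
    · obtain rfl : k = j := by simpa [hkA] using hk
      simp [insertExtend, hkA]

theorem card_fiber_eq_sum_card_fiber_insert [Fintype F] [Finite (α → F)] (hj : j ∉ A)
    (z : ↥A → F) (P Q : (α → F) → Prop) :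
    Nat.card {x : α → F // P x ∧ (∀ k : ↥A, x k = z k) ∧ Q x} =
      ∑ v : F, Nat.card
        {x : α → F // P x ∧ (∀ k : ↥(insert j A), x k = insertExtend z j v k) ∧ Q x} := by
  rw [Nat.card_eq_sum_card_fiber _ fun x => x j]
  refine Finset.sum_congr rfl fun v _ => Nat.card_congr (Equiv.subtypeEquivRight fun x => ?_)
  rw [forall_eq_insertExtend_iff hj]
  tauto

end InsertExtend

section Secure

variable {m ℓ : ℕ} {F Y : Type*} [Fintype F] [Fintype Y] {p : Y → NNReal}
  {f : (Fin m → F) → Y → (Fin ℓ → F)} {i : Fin m}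

theorem Secure.of_insert {A : Finset (Fin m)} {j : Fin m} (h : Secure p f (insert j A) i) :
    Secure p f A i := by
  by_cases hj : j ∈ A
  · rwa [Finset.insert_eq_of_mem hj] at h
  intro c z a b
  have split : ∀ w : F,
      ∑ y, p y * (Nat.card {x // f x y = c ∧ (∀ k : ↥A, x k = z k) ∧ x i = w} : NNReal) =
        ∑ v, ∑ y, p y * (Nat.card {x // f x y = c ∧
          (∀ k : ↥(insert j A), x k = insertExtend z j v k) ∧ x i = w} : NNReal) := by
    intro w
    simp_rw [card_fiber_eq_sum_card_fiber_insert hj z, Nat.cast_sum, Finset.mul_sum]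
    exact Finset.sum_comm
  rw [split a, split b]
  exact Finset.sum_congr rfl fun v _ => h c (insertExtend z j v) a b

theorem Secure.of_union {A : Finset (Fin m)} (D : Finset (Fin m)) (h : Secure p f (A ∪ D) i) :
    Secure p f A i := by
  classical
  induction D using Finset.induction_on with
  | empty => simpa using h
  | insert j D _ ih => exact ih (by rw [Finset.union_insert] at h; exact h.of_insert)

theorem Secure.anti {A B : Finset (Fin m)} (hAB : A ⊆ B) (h : Secure p f B i) :
    Secure p f A i :=
  Secure.of_union B (by rwa [Finset.union_eq_right.mpr hAB])

end Secure

theorem secure_t_level_mono_general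
    (m ℓ : ℕ) (t t' : ℕ) (ht' : t' < t) (ht : t ≤ m - 1)
    (F : Type*) [Fintype F]
    (Y : Type*) [Fintype Y] (p : Y → NNReal)
    (f : (Fin m → F) → Y → (Fin ℓ → F))
    (hsec : ∀ A : Finset (Fin m), A.card = t → ∀ i ∉ A, Secure p f A i) :
    ∀ A' : Finset (Fin m), A'.card = t' → ∀ i ∉ A', Secure p f A' i := by
  intro A' hA' i hi
  have hroom : t ≤ (Finset.univ.erase i).card := by
    rwa [Finset.card_erase_of_mem (Finset.mem_univ i), Finset.card_univ, Fintype.card_fin]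
  obtain ⟨A, hA'A, hAi, hA⟩ := Finset.exists_subsuperset_card_eq
    (fun k hk => Finset.mem_erase.mpr ⟨by rintro rfl; exact hi hk, Finset.mem_univ k⟩)
    (hA' ▸ ht'.le) hroom
  exact (hsec A hA i fun h => Finset.notMem_erase i _ (hAi h)).anti hA'A

/-- **Lemma 1.** Any (deterministic or random) index code secure against an
eavesdropper with `t`-level access is also secure against an eavesdropper with
`t'`-level access for any `t' < t` (here `0 ≤ t' < t ≤ m - 1`). -/
theorem secure_t_level_mono
    (m ℓ : ℕ) (t t' : ℕ) (ht' : t' < t) (ht : t ≤ m - 1) (hm : 1 ≤ m)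
    (F : Type*) [Field F] [Fintype F]
    (Y : Type*) [Fintype Y] (p : Y → NNReal) (hp : (∑ y : Y, p y) = 1)
    (f : (Fin m → F) → Y → (Fin ℓ → F))
    (hsec : ∀ A : Finset (Fin m), A.card = t → ∀ i ∉ A, Secure p f A i) :
    ∀ A' : Finset (Fin m), A'.card = t' → ∀ i ∉ A', Secure p f A' i :=
  secure_t_level_mono_general m ℓ t t' ht' ht F Y p f hsec
end

section
/- (Theorem 1, sufficiency.) Consider receivers with knowledge sets K_i ⊆ Fin m and want sets W_i ⊆ Fin m, let K_min = min_i |K_i| ≥ 1, let t < K_min, and set ℓ = m − K_min. Then over any finite field F with |F| ≥ m there exists a matrix G : Matrix (Fin m) (Fin ℓ) F such that the deterministic linear index code f x = x ᵥ* G is decodable for every receiver i and satisfies the security condition at (A, j) for every A ⊆ Fin m with |A| = t and every j ∉ A. Hence deterministic linear index codes secure against an eavesdropper with t-level access exist whenever t < K_min. -/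
open Matrix

/-!
The code is `x ↦ x ᵥ* G` for the `m × ℓ` Vandermonde matrix `G = (α i ^ k)` on distinct nodes
`α i ∈ F`, where `ℓ = m - K_min`; any `ℓ` rows of `G` are linearly independent.

Decoding: two messages with the same codeword that agree on `K` differ by a left-kernel vector
supported on `Kᶜ`, a set of at most `ℓ` rows, so they are equal.

Security: as `|A| + 1 + ℓ ≤ m`, row `j` is a combination of `ℓ` rows outside `A ∪ {j}`, which
gives a left-kernel vector `v` with `v = 0` on `A` and `v j = 1`. Translation by `(b - a) • v`
then maps the messages counted for `x j = a` bijectively onto those counted for `x j = b`.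
-/

open Finset

section GeneralPosition

variable {ι κ F : Type*} [Field F] [Fintype κ]

/-- Equivalently, the left kernel of `G` is an MDS code: its nonzero vectors have more than
`|κ|` nonzero entries. -/
def Matrix.RowsInGeneralPosition (G : Matrix ι κ F) : Prop :=
  ∀ s : Finset ι, #s ≤ Fintype.card κ → LinearIndependent F fun i : s => G i

theorem Matrix.rectVandermonde_rowsInGeneralPosition {n : ℕ} {α : ι → F}
    (hα : Function.Injective α) : (rectVandermonde α 1 n).RowsInGeneralPosition := by
  intro s hs
  rw [Fintype.linearIndependent_iff]
  intro g hg
  let e : Fin #s ≃ s := s.equivFin.symm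
  have hzero : g ∘ e = 0 := by
    refine eq_zero_of_forall_pow_sum_mul_pow_eq_zero (f := fun p => α (e p))
      (fun p q h => e.injective (Subtype.ext (hα h))) fun k => ?_
    have hk := congrFun hg ⟨k, k.2.trans_le (by simpa using hs)⟩
    simp only [Finset.sum_apply, Pi.smul_apply, rectVandermonde_apply, Pi.one_apply, one_pow,
      mul_one, smul_eq_mul, Pi.zero_apply] at hk
    rw [← hk]
    exact Fintype.sum_equiv e _ _ fun p => rfl
  intro i
  simpa using congrFun hzero (e.symm i)

namespace Matrix.RowsInGeneralPosition

variable [Fintype ι] {G : Matrix ι κ F}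

theorem eq_zero_of_vecMul_eq_zero (hG : G.RowsInGeneralPosition) {v : ι → F} (hv : v ᵥ* G = 0)
    {s : Finset ι} (hs : #s ≤ Fintype.card κ) (hsupp : ∀ i ∉ s, v i = 0) : v = 0 := by
  have hsum : ∑ i : s, v i • G i = 0 := by
    rw [← hv, vecMul_eq_sum, Finset.sum_coe_sort s fun i => v i • G i]
    exact Finset.sum_subset (subset_univ s) fun i _ hi => by rw [hsupp i hi, zero_smul]
  funext i
  by_cases hi : i ∈ s
  · exact Fintype.linearIndependent_iff.mp (hG s hs) _ hsum ⟨i, hi⟩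
  · exact hsupp i hi

theorem exists_vecMul_eq_zero [DecidableEq ι] (hG : G.RowsInGeneralPosition) {A : Finset ι}
    {j : ι} (hj : j ∉ A) (hcard : #A + Fintype.card κ < Fintype.card ι) :
    ∃ v : ι → F, v ᵥ* G = 0 ∧ (∀ i ∈ A, v i = 0) ∧ v j = 1 := by
  obtain ⟨U, hU, hUcard⟩ := exists_subset_card_eq (s := (insert j A)ᶜ) (n := Fintype.card κ)
    (by rw [card_compl, card_insert_of_notMem hj]; omega)
  have hspan : Submodule.span F (Set.range fun u : U => G u) = ⊤ :=
    (hG U hUcard.le).span_eq_top_of_card_eq_finrank' (by simp [hUcard])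
  obtain ⟨c, hc⟩ := (Submodule.mem_span_range_iff_exists_fun F).mp
    (hspan ▸ Submodule.mem_top : G j ∈ Submodule.span F _)
  have hout : ∀ i ∉ U, (∑ u : U, c u • Pi.single (u : ι) (1 : F)) i = 0 := fun i hi => by
    simp only [Finset.sum_apply, Pi.smul_apply, Pi.single_apply, smul_eq_mul]
    exact sum_eq_zero fun u _ => by rw [if_neg (by rintro rfl; exact hi u.2), mul_zero]
  refine ⟨Pi.single j 1 - ∑ u : U, c u • Pi.single (u : ι) 1, ?_, fun i hi => ?_, ?_⟩
  · simp only [sub_vecMul, sum_vecMul, smul_vecMul, single_one_vecMul]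
    exact sub_eq_zero.mpr hc.symm
  · rw [Pi.sub_apply, hout i fun h => mem_compl.mp (hU h) (mem_insert_of_mem hi),
      Pi.single_eq_of_ne (ne_of_mem_of_not_mem hi hj), sub_zero]
  · rw [Pi.sub_apply, hout j fun h => mem_compl.mp (hU h) (mem_insert_self j A),
      Pi.single_eq_same, sub_zero]

end Matrix.RowsInGeneralPosition

end GeneralPosition

section IndexCoding

variable {m ℓ : ℕ} {F : Type*}

theorem detDecodable_of_determined [Nonempty F] {f : (Fin m → F) → (Fin ℓ → F)}
    {K W : Finset (Fin m)} (h : ∀ x x', f x = f x' → (∀ k ∈ K, x k = x' k) → ∀ w ∈ W, x w = x' w) :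
    DetDecodable f K W := by
  refine ⟨fun c z w => (Classical.epsilon fun x => f x = c ∧ ∀ k : K, x k = z k) w, fun x => ?_⟩
  obtain ⟨hfx, hK⟩ := Classical.epsilon_spec (p := fun x' => f x' = f x ∧ ∀ k : K, x' k = x k)
    ⟨x, rfl, fun _ => rfl⟩
  exact funext fun w => h _ x hfx (fun k hk => hK ⟨k, hk⟩) w w.2

variable [Field F]

theorem detSecure_vecMul_of_vecMul_eq_zero {G : Matrix (Fin m) (Fin ℓ) F} {A : Finset (Fin m)}
    {j : Fin m} {v : Fin m → F} (hv : v ᵥ* G = 0) (hA : ∀ i ∈ A, v i = 0) (hj : v j = 1) :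
    DetSecure (· ᵥ* G) A j := by
  intro c z a b
  refine Nat.card_congr (Equiv.subtypeEquiv (Equiv.addRight ((b - a) • v)) fun x => ?_)
  simp only [Equiv.coe_addRight, add_vecMul, smul_vecMul, hv, smul_zero, add_zero, Pi.add_apply,
    Pi.smul_apply, smul_eq_mul, hA _ (coe_mem _), mul_zero, hj, mul_one, ← eq_sub_iff_add_eq,
    sub_sub_cancel]

theorem Matrix.RowsInGeneralPosition.detDecodable_vecMul {G : Matrix (Fin m) (Fin ℓ) F}
    (hG : G.RowsInGeneralPosition) {K : Finset (Fin m)} (hK : m ≤ #K + ℓ) (W : Finset (Fin m)) :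
    DetDecodable (· ᵥ* G) K W := by
  refine detDecodable_of_determined fun x x' hxx' hagree w _ => ?_
  have h0 := hG.eq_zero_of_vecMul_eq_zero (v := x - x') (by rw [sub_vecMul, hxx', sub_self])
    (s := Kᶜ) (by simp only [card_compl, Fintype.card_fin]; omega)
    fun i hi => sub_eq_zero.mpr (hagree i (notMem_compl.mp hi))
  exact sub_eq_zero.mp (congrFun h0 w)

theorem Matrix.RowsInGeneralPosition.detSecure_vecMul {G : Matrix (Fin m) (Fin ℓ) F}
    (hG : G.RowsInGeneralPosition) {A : Finset (Fin m)} {j : Fin m} (hj : j ∉ A)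
    (hA : #A + ℓ < m) : DetSecure (· ᵥ* G) A j := by
  obtain ⟨v, hv, hvA, hvj⟩ := hG.exists_vecMul_eq_zero hj (by simpa using hA)
  exact detSecure_vecMul_of_vecMul_eq_zero hv hvA hvj

end IndexCoding

theorem exists_secure_linear_index_code_general
    (m n t : ℕ) (K W : Fin n → Finset (Fin m))
    (Kmin : ℕ) (hKmin : IsLeast (Set.range fun i => (K i).card) Kmin)
    (ht : t < Kmin)
    (F : Type*) [Field F] [Fintype F] (hF : m ≤ Fintype.card F) :
    ∃ G : Matrix (Fin m) (Fin (m - Kmin)) F,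
      (∀ i, DetDecodable (fun x => x ᵥ* G) (K i) (W i)) ∧
      (∀ A : Finset (Fin m), A.card = t → ∀ j ∉ A, DetSecure (fun x => x ᵥ* G) A j) := by
  obtain ⟨⟨i₀, hi₀⟩, hmin⟩ := hKmin
  have hKm : Kmin ≤ m := hi₀ ▸ (card_le_univ (K i₀)).trans_eq (Fintype.card_fin m)
  obtain ⟨α⟩ : Nonempty (Fin m ↪ F) := Function.Embedding.nonempty_of_card_le (by simpa using hF)
  have hG := rectVandermonde_rowsInGeneralPosition (n := m - Kmin) α.injective
  refine ⟨_, fun i => hG.detDecodable_vecMul ?_ (W i), fun A hA j hj => hG.detSecure_vecMul hj ?_⟩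
  · have : Kmin ≤ #(K i) := hmin ⟨i, rfl⟩
    omega
  · omega

/-- **Theorem 1 (sufficiency).** If `t < K_min = min_i |K_i|` (with `K_min ≥ 1`), then over
any finite field `F` with `|F| ≥ m` there is a matrix `G` of size `m × (m - K_min)` such
that the deterministic linear index code `x ↦ x ᵥ* G` is decodable for every receiver and
is secure against an eavesdropper with `t`-level access. -/
theorem exists_secure_linear_index_code
    (m n t : ℕ) (K W : Fin n → Finset (Fin m))
    (Kmin : ℕ) (hKmin : IsLeast (Set.range fun i => (K i).card) Kmin)
    (hK1 : 1 ≤ Kmin) (ht : t < Kmin)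
    (F : Type*) [Field F] [Fintype F] (hF : m ≤ Fintype.card F) :
    ∃ G : Matrix (Fin m) (Fin (m - Kmin)) F,
      (∀ i, DetDecodable (fun x => x ᵥ* G) (K i) (W i)) ∧
      (∀ A : Finset (Fin m), A.card = t → ∀ j ∉ A, DetSecure (fun x => x ᵥ* G) A j) :=
  exists_secure_linear_index_code_general m n t K W Kmin hKmin ht F hF
end

section
/- (Theorem 1, necessity.) Consider receivers with knowledge sets K_i ⊆ Fin m and want sets W_i ⊆ Fin m satisfying W_i \ K_i ≠ ∅ for every i, let K_min = min_i |K_i|, and let t satisfy K_min ≤ t ≤ m − 1. Then no (deterministic or random) index code of any length, over any finite field and with any key alphabet and key pmf, is simultaneously decodable for all receivers and secure against an eavesdropper with t-level access (i.e., satisfies the security condition at (A, j) for all A ⊆ Fin m with |A| = t and all j ∉ A). -/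
open Matrix

/-! An eavesdropper who knows a receiver's side information `K` and observes the codeword can
run that receiver's decoder, so it learns every wanted message `x i`. Choosing a receiver with
`|K| = K_min` and some `i ∈ W \ K`, the bounds `K_min ≤ t ≤ m - 1` let us enlarge `K` to a
`t`-set `A` avoiding `i`, and the security condition at `(A, i)` fails. -/

theorem Finset.exists_superset_card_eq_notMem {α : Type*} [Fintype α] [DecidableEq α]
    {K : Finset α} {i : α} {t : ℕ} (hi : i ∉ K) (hKt : K.card ≤ t)
    (ht : t ≤ Fintype.card α - 1) : ∃ A, K ⊆ A ∧ A.card = t ∧ i ∉ A := by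
  have hK : K ⊆ univ.erase i := fun j hj => mem_erase.2 ⟨fun h => hi (h ▸ hj), mem_univ j⟩
  obtain ⟨A, hKA, hA, hAt⟩ := exists_subsuperset_card_eq hK hKt (by simpa [card_erase_of_mem])
  exact ⟨A, hKA, hAt, fun h => (mem_erase.1 (hA h)).1 rfl⟩

section IndexCode

variable {m ℓ : ℕ} {F Y : Type*} {f : (Fin m → F) → Y → (Fin ℓ → F)}

theorem Decodable.apply_eq_of_eq {K W : Finset (Fin m)} (hf : Decodable f K W) {i : Fin m}
    (hi : i ∈ W) {x x' : Fin m → F} {y y' : Y} (hc : f x y = f x' y')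
    (hK : ∀ j ∈ K, x j = x' j) : x i = x' i := by
  obtain ⟨g, hg⟩ := hf
  have hside : (fun j : ↥K => x j.1) = fun j => x' j.1 := funext fun j => hK j.1 j.2
  exact congrFun ((hg x y).symm.trans (hc ▸ hside ▸ hg x' y')) ⟨i, hi⟩

theorem Secure.exists_of_exists [Fintype Y] [Finite F] {p : Y → NNReal} {A : Finset (Fin m)}
    {i : Fin m} (hsec : Secure p f A i) {c : Fin ℓ → F} {z : ↥A → F} {a : F} {y : Y}
    (hy : p y ≠ 0) (ha : ∃ x, f x y = c ∧ (∀ j : ↥A, x j.1 = z j) ∧ x i = a) (b : F) :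
    ∃ y' x, f x y' = c ∧ (∀ j : ↥A, x j.1 = z j) ∧ x i = b := by
  by_contra! hb
  have hzero : ∀ y' ∈ Finset.univ, p y' *
      (Nat.card {x : Fin m → F // f x y' = c ∧ (∀ j : ↥A, x j.1 = z j) ∧ x i = a} : NNReal)
        = 0 := by
    rw [← Finset.sum_eq_zero_iff, hsec c z a b]
    refine Finset.sum_eq_zero fun y' _ => ?_
    rw [Nat.card_eq_zero.2 (Or.inl ⟨fun x => hb y' x.1 x.2.1 x.2.2.1 x.2.2.2⟩)]
    simp
  obtain ⟨x, hx⟩ := ha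
  have : Nonempty {x : Fin m → F // f x y = c ∧ (∀ j : ↥A, x j.1 = z j) ∧ x i = a} := ⟨⟨x, hx⟩⟩
  exact (mul_ne_zero hy (Nat.cast_ne_zero.2 Nat.card_pos.ne')) (hzero y (Finset.mem_univ y))

theorem Decodable.not_secure_of_subset [Fintype Y] [Finite F] [Nontrivial F]
    {p : Y → NNReal} {K W A : Finset (Fin m)} (hf : Decodable f K W) {i : Fin m} (hi : i ∈ W)
    (hKA : K ⊆ A) {y : Y} (hy : p y ≠ 0) : ¬ Secure p f A i := by
  intro hsec
  obtain ⟨x₀⟩ : Nonempty (Fin m → F) := inferInstance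
  obtain ⟨b, hb⟩ := exists_ne (x₀ i)
  obtain ⟨y', x, hc, hz, hxb⟩ := hsec.exists_of_exists (z := fun j => x₀ j.1) hy
    ⟨x₀, rfl, fun _ => rfl, rfl⟩ b
  exact hb (hxb ▸ hf.apply_eq_of_eq hi hc fun j hj => hz ⟨j, hKA hj⟩)

end IndexCode

theorem no_secure_code_of_t_ge_Kmin_general
    (m n t : ℕ) (K W : Fin n → Finset (Fin m))
    (hWK : ∀ i, (W i \ K i).Nonempty)
    (Kmin : ℕ) (hKmin : IsLeast (Set.range fun i => (K i).card) Kmin)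
    (ht1 : Kmin ≤ t) (ht2 : t ≤ m - 1)
    (F : Type*) [Field F] [Fintype F] (ℓ : ℕ)
    (Y : Type*) [Fintype Y] (p : Y → NNReal) (hp : (∑ y : Y, p y) = 1)
    (f : (Fin m → F) → Y → (Fin ℓ → F)) :
    ¬ ((∀ i, Decodable f (K i) (W i)) ∧
       (∀ A : Finset (Fin m), A.card = t → ∀ j ∉ A, Secure p f A j)) := by
  rintro ⟨hdec, hsec⟩
  obtain ⟨i₀, hi₀⟩ := hKmin.1
  obtain ⟨i, hi⟩ := hWK i₀
  obtain ⟨hiW, hiK⟩ := Finset.mem_sdiff.1 hi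
  obtain ⟨A, hKA, hA, hiA⟩ := Finset.exists_superset_card_eq_notMem hiK (hi₀ ▸ ht1)
    (by simpa using ht2)
  obtain ⟨y, -, hy⟩ := Finset.exists_ne_zero_of_sum_ne_zero (hp ▸ one_ne_zero)
  exact (hdec i₀).not_secure_of_subset hiW hKA hy (hsec A hA i hiA)

/-- **Theorem 1 (necessity).** If every receiver wants something it does not know, and
`K_min ≤ t ≤ m - 1`, then no (deterministic or random) index code of any length, over any
finite field, with any key alphabet and key pmf, is simultaneously decodable for all
receivers and secure against an eavesdropper with `t`-level access. -/
theorem no_secure_code_of_t_ge_Kmin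
    (m n t : ℕ) (K W : Fin n → Finset (Fin m))
    (hWK : ∀ i, (W i \ K i).Nonempty)
    (Kmin : ℕ) (hKmin : IsLeast (Set.range fun i => (K i).card) Kmin)
    (ht1 : Kmin ≤ t) (ht2 : t ≤ m - 1) (hm : 1 ≤ m)
    (F : Type*) [Field F] [Fintype F] (ℓ : ℕ)
    (Y : Type*) [Fintype Y] (p : Y → NNReal) (hp : (∑ y : Y, p y) = 1)
    (f : (Fin m → F) → Y → (Fin ℓ → F)) :
    ¬ ((∀ i, Decodable f (K i) (W i)) ∧
       (∀ A : Finset (Fin m), A.card = t → ∀ j ∉ A, Secure p f A j)) :=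
  no_secure_code_of_t_ge_Kmin_general m n t K W hWK Kmin hKmin ht1 ht2 F ℓ Y p hp f
end

section
/- Let F be a field and let G : Matrix (Fin m) (Fin ℓ) F (ℓ ≤ m) be such that for every S ⊆ Fin m with |S| = ℓ the rows of G indexed by S are linearly independent. Then for every K ⊆ Fin m with |K| ≥ m − ℓ, the map x ↦ (x ᵥ* G, restriction of x to K) from (Fin m → F) is injective. In particular, a receiver knowing x|_K can recover all of x, so a decoder exists for any receiver (K, W) with |K| ≥ m − ℓ for the linear index code f x = x ᵥ* G. -/
open Matrix

/-! A vector in the kernel of `x ↦ x ᵥ* G` that vanishes on `K` is a linear relation among the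
rows of `G` indexed by `Kᶜ`. Since `|Kᶜ| ≤ ℓ`, these rows lie inside some `ℓ` rows of `G` and are
therefore linearly independent, so the relation is trivial. The decoder then inverts the
injective map `x ↦ (x ᵥ* G, x|_K)` and reads off the coordinates in `W`. -/

theorem linearIndepOn_of_card_le {ι R M : Type*} [Fintype ι] [Semiring R] [AddCommMonoid M]
    [Module R M] {v : ι → M} {ℓ : ℕ} (hℓ : ℓ ≤ Fintype.card ι)
    (hv : ∀ S : Finset ι, S.card = ℓ → LinearIndepOn R v S) {T : Finset ι} (hT : T.card ≤ ℓ) :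
    LinearIndepOn R v T := by
  obtain ⟨S, hTS, hS⟩ := Finset.exists_superset_card_eq hT hℓ
  exact (hv S hS).mono (Finset.coe_subset.2 hTS)

theorem eq_zero_of_vecMul_eq_zero_of_linearIndepOn {ι n R : Type*} [Fintype ι] [Ring R]
    {G : Matrix ι n R} {T : Finset ι} (hT : LinearIndepOn R G T) {x : ι → R}
    (hx : ∀ i ∉ T, x i = 0) (hxG : x ᵥ* G = 0) : x = 0 := by
  have hsum : ∑ i ∈ T, x i • G i = 0 := by
    rw [← hxG, vecMul_eq_sum]
    exact Finset.sum_subset T.subset_univ fun i _ hi => by rw [hx i hi, zero_smul]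
  funext i
  by_cases hi : i ∈ T
  · exact linearIndepOn_finset_iff.1 hT x hsum i hi
  · exact hx i hi

theorem injective_vecMul_prod_restrict {ι n R : Type*} [Fintype ι] [DecidableEq ι] [Ring R]
    {G : Matrix ι n R} {K : Finset ι} (hG : LinearIndepOn R G ↑Kᶜ) :
    Function.Injective fun x : ι → R => (x ᵥ* G, fun j : ↥K => x j.1) := by
  intro x y hxy
  obtain ⟨hxyG, hxyK⟩ := Prod.mk.inj hxy
  rw [← sub_eq_zero]
  refine eq_zero_of_vecMul_eq_zero_of_linearIndepOn hG (fun i hi => ?_) ?_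
  · exact sub_eq_zero.2 (congrFun hxyK ⟨i, by simpa using hi⟩)
  · rw [sub_vecMul, hxyG, sub_self]

/-- **Decodability of the MDS-based linear code.** If every `ℓ` rows of
`G : Matrix (Fin m) (Fin ℓ) F` are linearly independent, then for every knowledge set `K`
with `|K| ≥ m - ℓ`, the map `x ↦ (x ᵥ* G, x|_K)` is injective; in particular, for every
want set `W` a decoder `g` exists for the linear index code `x ↦ x ᵥ* G`. -/
theorem mds_linear_code_decodable
    (m ℓ : ℕ) (hℓ : ℓ ≤ m) (F : Type*) [Field F]
    (G : Matrix (Fin m) (Fin ℓ) F)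
    (hG : ∀ S : Finset (Fin m), S.card = ℓ →
      LinearIndependent F (fun j : ↥S => G j.1)) :
    ∀ K : Finset (Fin m), m - ℓ ≤ K.card →
      (Function.Injective
          (fun x : Fin m → F => (x ᵥ* G, fun j : ↥K => x j.1)) ∧
        ∀ W : Finset (Fin m),
          ∃ g : (Fin ℓ → F) → (↥K → F) → (↥W → F),
            ∀ x : Fin m → F, g (x ᵥ* G) (fun j => x j.1) = fun j => x j.1) := by
  intro K hK
  have hKc : LinearIndepOn F G ↑Kᶜ :=
    linearIndepOn_of_card_le (by rwa [Fintype.card_fin]) hG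
      (by rw [Finset.card_compl, Fintype.card_fin]; omega)
  have hinj := injective_vecMul_prod_restrict hKc
  refine ⟨hinj, fun W => ⟨fun c k j => Function.invFun
    (fun x : Fin m → F => (x ᵥ* G, fun j : ↥K => x j.1)) (c, k) j.1, fun x => ?_⟩⟩
  simp only [Function.leftInverse_invFun hinj x]
end

section
/- Let F be a field, ℓ ≤ m, and let G : Matrix (Fin m) (Fin ℓ) F be such that every ℓ rows of G are linearly independent. Then for every A ⊆ Fin m with |A| ≤ m − ℓ − 1 and every i ∉ A, the standard basis vector e_i of (Fin m → F) does not belong to the linear span of the columns of G together with the set {e_j : j ∈ A}. (This is the linear-algebraic security of the MDS-based index code: an eavesdropper knowing x|_A and x ᵥ* G gains no information about x_i.) -/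
/-!
Write `e_i = G *ᵥ a + w` with `w` supported on `A`. Since `|A ∪ {i}| + ℓ ≤ m`, there are `ℓ`
coordinates `S` outside `A ∪ {i}`; on them `G *ᵥ a` vanishes, and the `ℓ` independent rows of `G`
indexed by `S` span `F^ℓ`, so `a = 0`. Then `e_i = w` vanishes at `i`, which is absurd.
-/

open Matrix

theorem Pi.apply_eq_zero_of_mem_span_single_image {ι R : Type*} [DecidableEq ι] [Semiring R]
    {s : Set ι} {v : ι → R} (hv : v ∈ Submodule.span R ((fun j => Pi.single j 1) '' s))
    {i : ι} (hi : i ∉ s) : v i = 0 := by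
  refine (Submodule.span_le (p := LinearMap.ker (LinearMap.proj i)).mpr ?_) hv
  rintro _ ⟨j, hj, rfl⟩
  exact Pi.single_eq_of_ne (ne_of_mem_of_not_mem hj hi).symm 1

theorem Matrix.eq_zero_of_forall_dotProduct_eq_zero_of_linearIndependent
    {K ι n : Type*} [Field K] [Fintype ι] [Fintype n] {b : ι → n → K}
    (hb : LinearIndependent K b) (hcard : Fintype.card ι = Fintype.card n) {a : n → K}
    (ha : ∀ k, b k ⬝ᵥ a = 0) : a = 0 := by
  have hspan : Submodule.span K (Set.range b) = ⊤ :=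
    hb.span_eq_top_of_card_eq_finrank' (by simpa using hcard)
  have hdot : dotProductBilin K K a = 0 :=
    LinearMap.ext_on_range hspan fun k => by simpa [dotProduct_comm] using ha k
  exact dotProduct_eq_zero a fun w => LinearMap.congr_fun hdot w

theorem mds_linear_code_secure_span_general
    (m ℓ : ℕ) (F : Type*) [Field F]
    (G : Matrix (Fin m) (Fin ℓ) F)
    (hG : ∀ S : Finset (Fin m), S.card = ℓ →
      LinearIndependent F (fun j : ↥S => G j.1)) :
    ∀ A : Finset (Fin m), A.card + ℓ + 1 ≤ m → ∀ i ∉ A,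
      (Pi.single i 1 : Fin m → F) ∉
        Submodule.span F
          ((Set.range fun k : Fin ℓ => fun j : Fin m => G j k) ∪
            ((fun j : Fin m => (Pi.single j 1 : Fin m → F)) '' ↑A)) := by
  intro A hA i hi h
  rw [Submodule.span_union, Submodule.mem_sup] at h
  obtain ⟨u, hu, w, hw, hsum⟩ := h
  change u ∈ Submodule.span F (Set.range G.col) at hu
  obtain ⟨a, rfl⟩ := G.range_mulVecLin ▸ hu
  have hw_off : ∀ j ∉ A, w j = 0 := fun j hj =>
    Pi.apply_eq_zero_of_mem_span_single_image hw (by simpa using hj)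
  have hcompl : ℓ ≤ (insert i A)ᶜ.card := by
    have := Finset.card_insert_le i A
    rw [Finset.card_compl, Fintype.card_fin]
    omega
  obtain ⟨S, hS, hScard⟩ := Finset.exists_subset_card_eq hcompl
  have ha : a = 0 := by
    refine eq_zero_of_forall_dotProduct_eq_zero_of_linearIndependent (hG S hScard)
      (by simpa using hScard) fun ⟨j, hj⟩ => ?_
    have hj' : j ≠ i ∧ j ∉ A := by simpa using hS hj
    have hsum_j := congr_fun hsum j
    rwa [Pi.add_apply, hw_off j hj'.2, add_zero, Pi.single_eq_of_ne hj'.1] at hsum_j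
  have hsum_i := congr_fun hsum i
  simp [ha, hw_off i hi] at hsum_i

/-- **Linear-algebraic security of the MDS-based index code.** If every `ℓ` rows of
`G : Matrix (Fin m) (Fin ℓ) F` are linearly independent, then for every `A ⊆ Fin m` with
`|A| ≤ m - ℓ - 1` (i.e. `|A| + ℓ + 1 ≤ m`) and every `i ∉ A`, the standard basis vector
`e_i` does not lie in the span of the columns of `G` together with `{e_j : j ∈ A}`. -/
theorem mds_linear_code_secure_span
    (m ℓ : ℕ) (hℓ : ℓ ≤ m) (F : Type*) [Field F]
    (G : Matrix (Fin m) (Fin ℓ) F)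
    (hG : ∀ S : Finset (Fin m), S.card = ℓ →
      LinearIndependent F (fun j : ↥S => G j.1)) :
    ∀ A : Finset (Fin m), A.card + ℓ + 1 ≤ m → ∀ i ∉ A,
      (Pi.single i 1 : Fin m → F) ∉
        Submodule.span F
          ((Set.range fun k : Fin ℓ => fun j : Fin m => G j k) ∪
            ((fun j : Fin m => (Pi.single j 1 : Fin m → F)) '' ↑A)) :=
  mds_linear_code_secure_span_general m ℓ F G hG
end

section
/- Let F be a finite field with |F| ≥ 2, let G : Matrix (Fin m) (Fin ℓ) F, let f x = x ᵥ* G, let A ⊆ Fin m and i ∉ A. Then the security condition at (A, i) holds for f if and only if the standard basis vector e_i of (Fin m → F) does not belong to the linear span of the columns of G together with {e_j : j ∈ A}. -/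
open Matrix

/-! Both sides say that some `x₀` with `x₀ ᵥ* G = 0` and `x₀|_A = 0` has `x₀ i ≠ 0`. Translating
by a multiple of such an `x₀` moves the fibre `x i = a` onto the fibre `x i = b` without changing
`f x` or `x|_A`; if there is none, the fibre of `(c, z, a) = (0, 0, 1)` is empty while that of
`(0, 0, 0)` contains `0`. On the span side, `x₀` is the dot-product form of a functional that
vanishes on the span but not at `e_i`. -/

theorem Submodule.notMem_span_iff_exists_dotProduct {K ι : Type*} [Field K] [Fintype ι]
    {S : Set (ι → K)} {v : ι → K} :
    v ∉ Submodule.span K S ↔ ∃ x : ι → K, (∀ s ∈ S, x ⬝ᵥ s = 0) ∧ x ⬝ᵥ v ≠ 0 := by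
  classical
  constructor
  · intro hv
    obtain ⟨φ, hφv, hφS⟩ := Submodule.exists_dual_map_eq_bot_of_notMem hv inferInstance
    have hφ : ∀ w, (dotProductEquiv K ι).symm φ ⬝ᵥ w = φ w := fun w =>
      congr($((dotProductEquiv K ι).apply_symm_apply φ) w)
    refine ⟨(dotProductEquiv K ι).symm φ, fun s hs => ?_, by rwa [hφ]⟩
    rw [hφ]
    exact (Submodule.eq_bot_iff _).1 hφS _ (Submodule.mem_map_of_mem (Submodule.subset_span hs))
  · rintro ⟨x, hxS, hxv⟩ hv
    have hspan : Submodule.span K S ≤ LinearMap.ker (dotProductEquiv K ι x) :=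
      Submodule.span_le.2 fun s hs => by simpa using hxS s hs
    exact hxv (by simpa using hspan hv)

section LinearCode

variable {m ℓ : ℕ} {F : Type*} [Field F] (f : (Fin m → F) →ₗ[F] (Fin ℓ → F))
  {A : Finset (Fin m)} {i : Fin m}

theorem detSecure_of_exists_ker {x₀ : Fin m → F} (hf : f x₀ = 0) (hA : ∀ j ∈ A, x₀ j = 0)
    (hi : x₀ i ≠ 0) : DetSecure f A i := by
  intro c z a b
  set t := (b - a) / x₀ i
  have ht : t * x₀ i = b - a := div_mul_cancel₀ _ hi
  refine Nat.card_congr (Equiv.subtypeEquiv (Equiv.addRight (t • x₀)) fun x => ?_)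
  simp only [Equiv.coe_addRight, map_add, map_smul, hf, smul_zero, add_zero, Pi.add_apply,
    Pi.smul_apply, smul_eq_mul, ht]
  refine and_congr_right fun _ => and_congr (forall_congr' fun j => ?_) ?_
  · rw [hA j j.2, mul_zero, add_zero]
  · constructor <;> intro h <;> linear_combination h

theorem exists_ker_of_detSecure [Finite F] (h : DetSecure f A i) :
    ∃ x₀ : Fin m → F, f x₀ = 0 ∧ (∀ j ∈ A, x₀ j = 0) ∧ x₀ i ≠ 0 := by
  have hcard := h 0 0 0 1
  have hzero : Nonempty {x : Fin m → F // f x = 0 ∧ (∀ j : ↥A, x j.1 = (0 : ↥A → F) j) ∧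
      x i = 0} := ⟨⟨0, by simp⟩⟩
  obtain ⟨⟨x, hx, hxA, hxi⟩⟩ := (Nat.card_pos_iff.1 (hcard ▸ Nat.card_pos)).1
  exact ⟨x, hx, fun j hj => hxA ⟨j, hj⟩, by simp [hxi]⟩

theorem detSecure_iff_exists_ker [Finite F] :
    DetSecure f A i ↔ ∃ x₀ : Fin m → F, f x₀ = 0 ∧ (∀ j ∈ A, x₀ j = 0) ∧ x₀ i ≠ 0 :=
  ⟨exists_ker_of_detSecure f, fun ⟨_, hf, hA, hi⟩ => detSecure_of_exists_ker f hf hA hi⟩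

end LinearCode

theorem linear_code_secure_iff_span_general
    (m ℓ : ℕ) (F : Type*) [Field F] [Fintype F]
    (G : Matrix (Fin m) (Fin ℓ) F)
    (A : Finset (Fin m)) (i : Fin m) :
    DetSecure (fun x => x ᵥ* G) A i ↔
      (Pi.single i 1 : Fin m → F) ∉
        Submodule.span F
          ((Set.range fun k : Fin ℓ => fun j : Fin m => G j k) ∪
            ((fun j : Fin m => (Pi.single j 1 : Fin m → F)) '' ↑A)) := by
  refine (detSecure_iff_exists_ker (Matrix.vecMulLinear G)).trans ?_
  rw [Submodule.notMem_span_iff_exists_dotProduct]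
  refine exists_congr fun x => ?_
  simp only [Set.mem_union, or_imp, forall_and, Set.forall_mem_range, Set.forall_mem_image,
    dotProduct_single, mul_one, Matrix.vecMulLinear_apply, funext_iff, Matrix.vecMul,
    Pi.zero_apply, Finset.mem_coe, and_assoc]

/-- **Security criterion for linear index codes.** For a finite field `F` (with `|F| ≥ 2`),
the deterministic linear index code `x ↦ x ᵥ* G` satisfies the (counting) security
condition at `(A, i)` iff the standard basis vector `e_i` is not in the span of the
columns of `G` together with `{e_j : j ∈ A}`. -/
theorem linear_code_secure_iff_span
    (m ℓ : ℕ) (F : Type*) [Field F] [Fintype F] (hF : 2 ≤ Fintype.card F)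
    (G : Matrix (Fin m) (Fin ℓ) F)
    (A : Finset (Fin m)) (i : Fin m) (hi : i ∉ A) :
    DetSecure (fun x => x ᵥ* G) A i ↔
      (Pi.single i 1 : Fin m → F) ∉
        Submodule.span F
          ((Set.range fun k : Fin ℓ => fun j : Fin m => G j k) ∪
            ((fun j : Fin m => (Pi.single j 1 : Fin m → F)) '' ↑A)) :=
  linear_code_secure_iff_span_general m ℓ F G A i
end

section
/- (b-block security of the MDS scheme.) Let F be a field, ℓ ≤ m, and let G : Matrix (Fin m) (Fin ℓ) F be such that every ℓ rows of G are linearly independent. Let A, B ⊆ Fin m be disjoint with |A| + |B| ≤ m − ℓ. Then the intersection of the span of {e_j : j ∈ B} with the span of the columns of G together with {e_j : j ∈ A} is the zero subspace. (Hence an eavesdropper knowing x|_A and x ᵥ* G gains no information about any block x|_B of b = |B| unknown messages, provided t + b ≤ K_min where t = |A| and ℓ = m − K_min.) -/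
/-!
Write a vector of the intersection as `x = G *ᵥ c + z` with `x` supported on `B` and `z` on
`A`. Then `G *ᵥ c` vanishes off `A ∪ B`, which leaves at least `ℓ` rows of `G` on which it
vanishes; these rows are independent, hence span `F^ℓ`, so `c = 0`. Thus `x = z` lies in the
spans of the disjoint coordinate sets `A` and `B`, so `x = 0`.
-/

open Matrix

theorem Pi.mem_span_single_image_iff {ι R : Type*} [Finite ι] [DecidableEq ι] [Semiring R]
    {s : Set ι} {x : ι → R} :
    x ∈ Submodule.span R ((fun j => (Pi.single j 1 : ι → R)) '' s) ↔ ∀ j ∉ s, x j = 0 := by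
  rw [← funext (Pi.basisFun_apply R ι), Module.Basis.mem_span_image]
  simp only [Set.subset_def, Finset.mem_coe, Finsupp.mem_support_iff, Pi.basisFun_repr]
  exact forall_congr' fun j => not_imp_comm

theorem Matrix.eq_zero_of_mulVec_apply_eq_zero_of_linearIndependent_rows {ι κ K : Type*}
    [Field K] [Fintype κ] (G : Matrix ι κ K) {S : Finset ι} (hS : S.card = Fintype.card κ)
    (hG : LinearIndependent K fun j : S => G j) {c : κ → K}
    (hc : ∀ j ∈ S, (G *ᵥ c) j = 0) : c = 0 := by
  have hspan : Submodule.span K (Set.range fun j : S => G j) = ⊤ :=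
    hG.span_eq_top_of_card_eq_finrank' (by simp [hS])
  have hker : Submodule.span K (Set.range fun j : S => G j) ≤
      LinearMap.ker ((dotProductBilin K K).flip c) := by
    rw [Submodule.span_le]
    rintro _ ⟨j, rfl⟩
    exact hc j j.2
  rw [hspan, top_le_iff, LinearMap.ker_eq_top] at hker
  exact dotProduct_eq_zero_iff.mp fun w => by
    simpa [dotProduct_comm] using LinearMap.congr_fun hker w

theorem mds_linear_code_block_secure_general
    (m ℓ : ℕ) (F : Type*) [Field F]
    (G : Matrix (Fin m) (Fin ℓ) F)
    (hG : ∀ S : Finset (Fin m), S.card = ℓ →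
      LinearIndependent F (fun j : ↥S => G j.1))
    (A B : Finset (Fin m)) (hAB : Disjoint A B)
    (hcard : A.card + B.card + ℓ ≤ m) :
    Submodule.span F ((fun j : Fin m => (Pi.single j 1 : Fin m → F)) '' ↑B) ⊓
      Submodule.span F
        ((Set.range fun k : Fin ℓ => fun j : Fin m => G j k) ∪
          ((fun j : Fin m => (Pi.single j 1 : Fin m → F)) '' ↑A)) = ⊥ := by
  rw [eq_bot_iff]
  rintro x ⟨hxB, hx⟩
  rw [SetLike.mem_coe, Submodule.span_union, Submodule.mem_sup] at hx
  obtain ⟨y, hy, z, hzA, rfl⟩ := hx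
  obtain ⟨c, rfl⟩ : ∃ c, G *ᵥ c = y :=
    (range_mulVecLin G ▸ hy : y ∈ LinearMap.range G.mulVecLin)
  obtain ⟨S, hSAB, hS⟩ : ∃ S ⊆ (A ∪ B)ᶜ, S.card = ℓ := by
    apply Finset.exists_subset_card_eq
    have := Finset.card_union_le A B
    rw [Finset.card_compl, Fintype.card_fin]
    omega
  have hc : c = 0 := by
    refine G.eq_zero_of_mulVec_apply_eq_zero_of_linearIndependent_rows
      (by rw [hS, Fintype.card_fin]) (hG S hS) fun j hj => ?_
    obtain ⟨hjA, hjB⟩ : j ∉ A ∧ j ∉ B := by simpa using hSAB hj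
    simpa [Pi.mem_span_single_image_iff.mp hzA j hjA] using
      Pi.mem_span_single_image_iff.mp hxB j hjB
  subst hc
  rw [mulVec_zero, zero_add] at hxB ⊢
  have hdisj := (Pi.basisFun F (Fin m)).linearIndependent.disjoint_span_image
    (Finset.disjoint_coe.mpr hAB)
  simp only [Pi.basisFun_apply] at hdisj
  exact Submodule.disjoint_def.mp hdisj z hzA hxB

/-- **b-block security of the MDS scheme.** If every `ℓ` rows of `G` are linearly
independent and `A, B ⊆ Fin m` are disjoint with `|A| + |B| ≤ m - ℓ`
(i.e. `|A| + |B| + ℓ ≤ m`), then the span of `{e_j : j ∈ B}` intersects the span of the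
columns of `G` together with `{e_j : j ∈ A}` trivially. -/
theorem mds_linear_code_block_secure
    (m ℓ : ℕ) (hℓ : ℓ ≤ m) (F : Type*) [Field F]
    (G : Matrix (Fin m) (Fin ℓ) F)
    (hG : ∀ S : Finset (Fin m), S.card = ℓ →
      LinearIndependent F (fun j : ↥S => G j.1))
    (A B : Finset (Fin m)) (hAB : Disjoint A B)
    (hcard : A.card + B.card + ℓ ≤ m) :
    Submodule.span F ((fun j : Fin m => (Pi.single j 1 : Fin m → F)) '' ↑B) ⊓
      Submodule.span F
        ((Set.range fun k : Fin ℓ => fun j : Fin m => G j k) ∪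
          ((fun j : Fin m => (Pi.single j 1 : Fin m → F)) '' ↑A)) = ⊥ :=
  mds_linear_code_block_secure_general m ℓ F G hG A B hAB hcard
end

section
/- (Proposition 6, converse.) Suppose some receiver has knowledge set K and want set W with K ∪ W = Fin m (complementary message requests). Then for any finite field F, any nonempty key alphabet Y, and any random index code f : (Fin m → F) → Y → (Fin ℓ → F) admitting a decoder g with g (f x y) (x|_K) = x|_W for all x and all y, one has ℓ ≥ m − |K|. (Combined with the achievability of length m − K_min, this shows the optimal secure codelength equals m − K_min when A_max < K_min and a receiver with |K_i| = K_min has complementary requests.) -/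
/-!
Fix one key `y`. The codeword `f x y` together with the side information `x|_K` determines
`x`: the decoder returns `x|_W`, and `K ∪ W` covers every index. Hence the `|F|^m` messages
inject into a set of size `|F|^(ℓ + |K|)`, and `|F| ≥ 2` gives `m ≤ ℓ + |K|`.
-/

open Function

theorem injective_prod_of_decode {X C S R : Type*} (e : X → C) (s : X → S) (r : X → R)
    (d : C → S → R) (hd : ∀ x, d (e x) (s x) = r x)
    (hsr : Injective fun x => (s x, r x)) : Injective fun x => (e x, s x) := by
  intro x x' h
  obtain ⟨he, hs⟩ := Prod.mk.inj h
  have hr : r x = r x' := by rw [← hd, ← hd, he, hs]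
  exact hsr (Prod.ext hs hr)

theorem injective_restrict_prod_of_union_eq_univ {α β : Type*} [Fintype α] [DecidableEq α]
    {s t : Finset α} (hst : s ∪ t = Finset.univ) :
    Injective fun x : α → β => ((fun i : s => x i), fun i : t => x i) := by
  intro x x' h
  obtain ⟨hs, ht⟩ := Prod.mk.inj h
  funext i
  rcases Finset.mem_union.mp (hst ▸ Finset.mem_univ i) with hi | hi
  · exact congrFun hs ⟨i, hi⟩
  · exact congrFun ht ⟨i, hi⟩

theorem card_le_add_of_injective_pi {α β γ F : Type*} [Fintype α] [Fintype β] [Fintype γ]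
    [Fintype F] [Nontrivial F] {φ : (α → F) → (β → F) × (γ → F)}
    (hφ : Injective φ) : Fintype.card α ≤ Fintype.card β + Fintype.card γ := by
  classical
  have hcard := Fintype.card_le_of_injective φ hφ
  rw [Fintype.card_prod, Fintype.card_fun, Fintype.card_fun, Fintype.card_fun,
    ← pow_add] at hcard
  exact (Nat.pow_le_pow_iff_right Fintype.one_lt_card).mp hcard

/-- **Proposition 6 (converse).** If a receiver has complementary message requests
(`K ∪ W = Fin m`), then any random index code admitting a decoder for this receiver has
codelength `ℓ ≥ m - |K|`. -/
theorem codelength_lower_bound_of_complementary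
    (m ℓ : ℕ) (K W : Finset (Fin m)) (hKW : K ∪ W = Finset.univ)
    (F : Type*) [Field F] [Fintype F]
    (Y : Type*) [Nonempty Y]
    (f : (Fin m → F) → Y → (Fin ℓ → F))
    (g : (Fin ℓ → F) → (↥K → F) → (↥W → F))
    (hg : ∀ (x : Fin m → F) (y : Y),
      g (f x y) (fun j => x j.1) = fun j => x j.1) :
    m - K.card ≤ ℓ := by
  obtain ⟨y⟩ := ‹Nonempty Y›
  have hinj : Injective fun x : Fin m → F => (f x y, fun j : K => x j.1) :=
    injective_prod_of_decode _ _ _ g (fun x => hg x y)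
      (injective_restrict_prod_of_union_eq_univ hKW)
  have hcard := card_le_add_of_injective_pi hinj
  rw [Fintype.card_fin, Fintype.card_fin, Fintype.card_coe] at hcard
  omega
end

section
/- (Key claim underlying Proposition 7, after Neely–Tehrani–Zhang.) Consider receivers (K_i, W_i), i = 1,…,n, over Fin m. Define the directed-edge relation on the sum type (Fin n) ⊕ (Fin m): there is an edge from receiver vertex i to message vertex j iff j ∈ K_i, and from message vertex j to receiver vertex i iff j ∈ W_i. Assume (i) this relation has no directed cycle, i.e., no vertex v satisfies Relation.TransGen edge v v, and (ii) every message is wanted by some receiver: for all j ∈ Fin m there is i with j ∈ W_i. Then for any random index code f : (Fin m → F) → Y → (Fin ℓ → F) decodable for all receivers: for all x, x', y, y', f x y = f x' y' implies x = x'. (The codeword alone determines all messages.) -/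
/-- The directed bipartite relation on `(Fin n) ⊕ (Fin m)`: an edge from receiver vertex
`i` to message vertex `j` iff `j ∈ K i`, and from message vertex `j` to receiver vertex `i`
iff `j ∈ W i`. -/
def edgeRel {m n : ℕ} (K W : Fin n → Finset (Fin m)) :
    (Fin n ⊕ Fin m) → (Fin n ⊕ Fin m) → Prop :=
  fun v w =>
    match v, w with
    | Sum.inl i, Sum.inr j => j ∈ K i
    | Sum.inr j, Sum.inl i => j ∈ W i
    | _, _ => False

theorem Finite.wellFounded_swap_transGen {α : Type*} [Finite α] {r : α → α → Prop}
    (hacyc : ∀ a, ¬ Relation.TransGen r a a) :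
    WellFounded (Function.swap (Relation.TransGen r)) :=
  haveI : IsTrans α (Function.swap (Relation.TransGen r)) := ⟨fun _ _ _ hab hbc => hbc.trans hab⟩
  haveI : Std.Irrefl (Function.swap (Relation.TransGen r)) := ⟨hacyc⟩
  Finite.wellFounded_of_trans_of_irrefl _

theorem Decodable.eq_on_want_of_eq_on_know {m ℓ : ℕ} {F Y : Type*}
    {f : (Fin m → F) → Y → (Fin ℓ → F)} {K W : Finset (Fin m)} (hdec : Decodable f K W)
    {x x' : Fin m → F} {y y' : Y} (hf : f x y = f x' y') (hK : ∀ k ∈ K, x k = x' k) :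
    ∀ j ∈ W, x j = x' j := by
  obtain ⟨g, hg⟩ := hdec
  intro j hj
  have hKfun : (fun k : K => x k) = fun k : K => x' k := funext fun k => hK k k.2
  calc x j = g (f x y) (fun k : K => x k) ⟨j, hj⟩ := by rw [hg]
    _ = g (f x' y') (fun k : K => x' k) ⟨j, hj⟩ := by rw [hf, hKfun]
    _ = x' j := by rw [hg]

theorem edgeRel_transGen_inr_inr {m n : ℕ} {K W : Fin n → Finset (Fin m)} {i : Fin n}
    {j k : Fin m} (hj : j ∈ W i) (hk : k ∈ K i) :
    Relation.TransGen (edgeRel K W) (Sum.inr j) (Sum.inr k) :=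
  .tail (.single (show edgeRel K W (.inr j) (.inl i) from hj))
    (show edgeRel K W (.inl i) (.inr k) from hk)

theorem codeword_determines_messages_of_acyclic_general
    (m n ℓ : ℕ) (K W : Fin n → Finset (Fin m))
    (hacyc : ∀ v : Fin n ⊕ Fin m, ¬ Relation.TransGen (edgeRel K W) v v)
    (hwant : ∀ j : Fin m, ∃ i, j ∈ W i)
    (F : Type*) (Y : Type*)
    (f : (Fin m → F) → Y → (Fin ℓ → F))
    (hdec : ∀ i, Decodable f (K i) (W i)) :
    ∀ (x x' : Fin m → F) (y y' : Y), f x y = f x' y' → x = x' := by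
  intro x x' y y' hf
  have hwf := InvImage.wf Sum.inr (Finite.wellFounded_swap_transGen hacyc)
  funext j
  induction j using hwf.induction with
  | _ j ih =>
    obtain ⟨i, hj⟩ := hwant j
    exact (hdec i).eq_on_want_of_eq_on_know hf
      (fun k hk => ih k (edgeRel_transGen_inr_inr hj hk)) j hj

/-- **Key claim underlying Proposition 7 (after Neely–Tehrani–Zhang).** If the directed
bipartite side-information graph is acyclic and every message is wanted by some receiver,
then for any random index code decodable for all receivers, the codeword alone determines
all messages. -/
theorem codeword_determines_messages_of_acyclic
    (m n ℓ : ℕ) (K W : Fin n → Finset (Fin m))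
    (hacyc : ∀ v : Fin n ⊕ Fin m, ¬ Relation.TransGen (edgeRel K W) v v)
    (hwant : ∀ j : Fin m, ∃ i, j ∈ W i)
    (F : Type*) [Field F] [Fintype F] (Y : Type*)
    (f : (Fin m → F) → Y → (Fin ℓ → F))
    (hdec : ∀ i, Decodable f (K i) (W i)) :
    ∀ (x x' : Fin m → F) (y y' : Y), f x y = f x' y' → x = x' :=
  codeword_determines_messages_of_acyclic_general m n ℓ K W hacyc hwant F Y f hdec
end

section
/- (Proposition 7.) Consider receivers (K_i, W_i), i = 1,…,n, over Fin m, such that (i) the directed bipartite relation on (Fin n) ⊕ (Fin m) — edge from receiver i to message j iff j ∈ K_i, and from message j to receiver i iff j ∈ W_i — has no directed cycle, and (ii) every message is wanted by some receiver. Let 𝔄 contain some A with A ≠ Fin m. Then no (deterministic or random) weakly-secure index code exists: any random index code f (with any key alphabet Y and key pmf p) that is decodable for all receivers fails the security condition at (A, i) for every i ∉ A. -/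
open Matrix

/-!
Acyclicity orders the messages so that every message is wanted by a receiver all of whose
side information comes earlier; by well-founded induction, decodability then forces the
codeword `f x y` to determine the whole message vector `x`, whatever the key. Conditioned on
the codeword, `x i` is therefore a constant, so it cannot be uniformly distributed.
-/

open Relation

theorem wellFounded_swap_transGen_of_acyclic {α : Type*} [Finite α] {r : α → α → Prop}
    (hacyc : ∀ a, ¬ TransGen r a a) : WellFounded (Function.swap (TransGen r)) :=
  haveI : IsTrans α (Function.swap (TransGen r)) := ⟨fun _ _ _ hab hbc => hbc.trans hab⟩
  haveI : Std.Irrefl (Function.swap (TransGen r)) := ⟨hacyc⟩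
  Finite.wellFounded_of_trans_of_irrefl _

theorem Decodable.eq_on_want {m ℓ : ℕ} {F Y : Type*} {f : (Fin m → F) → Y → (Fin ℓ → F)}
    {K W : Finset (Fin m)} (hdec : Decodable f K W) {x x' : Fin m → F} {y y' : Y}
    (hf : f x y = f x' y') (hK : ∀ j ∈ K, x j = x' j) : ∀ j ∈ W, x j = x' j := by
  obtain ⟨g, hg⟩ := hdec
  have hKfun : (fun j : ↥K => x j.1) = fun j => x' j.1 := funext fun j => hK j j.2
  intro j hj
  have := hg x y
  rw [hf, hKfun, hg x' y'] at this
  exact congrFun this.symm ⟨j, hj⟩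

theorem eq_of_codeword_eq_of_acyclic {m n ℓ : ℕ} {F Y : Type*} {K W : Fin n → Finset (Fin m)}
    (hacyc : ∀ v : Fin n ⊕ Fin m, ¬ TransGen (edgeRel K W) v v)
    (hwant : ∀ j : Fin m, ∃ i, j ∈ W i) {f : (Fin m → F) → Y → (Fin ℓ → F)}
    (hdec : ∀ i, Decodable f (K i) (W i)) {x x' : Fin m → F} {y y' : Y}
    (hf : f x y = f x' y') : x = x' := by
  have hwf := InvImage.wf Sum.inr (wellFounded_swap_transGen_of_acyclic hacyc)
  funext j
  induction j using hwf.induction with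
  | _ j ih =>
    obtain ⟨i, hji⟩ := hwant j
    refine (hdec i).eq_on_want hf (fun k hk => ih k ?_) j hji
    have hwant_edge : edgeRel K W (.inr j) (.inl i) := hji
    have hknow_edge : edgeRel K W (.inl i) (.inr k) := hk
    exact .head hwant_edge (.single hknow_edge)

theorem not_secure_of_codeword_determines {m ℓ : ℕ} {F Y : Type*} [Finite F] [Nontrivial F]
    [Fintype Y] {p : Y → NNReal} (hp : ∑ y, p y ≠ 0) {f : (Fin m → F) → Y → (Fin ℓ → F)}
    (A : Finset (Fin m)) {i : Fin m}
    (hdet : ∀ x x' y y', f x y = f x' y' → x i = x' i) : ¬ Secure p f A i := by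
  intro hsec
  obtain ⟨y₀, -, hy₀⟩ := Finset.exists_ne_zero_of_sum_ne_zero hp
  obtain ⟨a, b, hab⟩ := exists_pair_ne F
  let x₀ : Fin m → F := fun _ => a
  have hempty : ∀ y, IsEmpty
      {x // f x y = f x₀ y₀ ∧ (∀ j : ↥A, x j.1 = x₀ j.1) ∧ x i = b} :=
    fun y => ⟨fun ⟨x, hx, _, hxi⟩ => hab (hxi ▸ hdet x x₀ y y₀ hx).symm⟩
  have hx₀ : Nonempty
      {x // f x y₀ = f x₀ y₀ ∧ (∀ j : ↥A, x j.1 = x₀ j.1) ∧ x i = a} :=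
    ⟨⟨x₀, rfl, fun _ => rfl, rfl⟩⟩
  have hsum := hsec (f x₀ y₀) (fun j => x₀ j.1) a b
  simp only [Nat.card_of_isEmpty, Nat.cast_zero, mul_zero, Finset.sum_const_zero,
    Finset.sum_eq_zero_iff, Finset.mem_univ, true_implies] at hsum
  exact mul_ne_zero hy₀ (Nat.cast_ne_zero.mpr Nat.card_pos.ne') (hsum y₀)

theorem no_secure_code_of_acyclic_general
    (m n ℓ : ℕ) (K W : Fin n → Finset (Fin m))
    (hacyc : ∀ v : Fin n ⊕ Fin m, ¬ Relation.TransGen (edgeRel K W) v v)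
    (hwant : ∀ j : Fin m, ∃ i, j ∈ W i)
    (A : Finset (Fin m))
    (F : Type*) [Field F] [Fintype F]
    (Y : Type*) [Fintype Y] (p : Y → NNReal) (hp : (∑ y : Y, p y) = 1)
    (f : (Fin m → F) → Y → (Fin ℓ → F))
    (hdec : ∀ i, Decodable f (K i) (W i)) :
    ∀ i ∉ A, ¬ Secure p f A i := fun _ _ =>
  not_secure_of_codeword_determines (hp ▸ one_ne_zero) A fun _ _ _ _ hf =>
    congrFun (eq_of_codeword_eq_of_acyclic hacyc hwant hdec hf) _

/-- **Proposition 7.** If the directed bipartite side-information graph is acyclic, every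
message is wanted by some receiver, and `𝔄` contains some `A ≠ Fin m`, then no
(deterministic or random) weakly-secure index code exists: any random index code (with any
key alphabet and key pmf) decodable for all receivers fails the security condition at
`(A, i)` for every `i ∉ A`. -/
theorem no_secure_code_of_acyclic
    (m n ℓ : ℕ) (K W : Fin n → Finset (Fin m))
    (hacyc : ∀ v : Fin n ⊕ Fin m, ¬ Relation.TransGen (edgeRel K W) v v)
    (hwant : ∀ j : Fin m, ∃ i, j ∈ W i)
    (𝔄 : Set (Finset (Fin m))) (A : Finset (Fin m)) (hA : A ∈ 𝔄)
    (hAne : A ≠ Finset.univ)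
    (F : Type*) [Field F] [Fintype F]
    (Y : Type*) [Fintype Y] (p : Y → NNReal) (hp : (∑ y : Y, p y) = 1)
    (f : (Fin m → F) → Y → (Fin ℓ → F))
    (hdec : ∀ i, Decodable f (K i) (W i)) :
    ∀ i ∉ A, ¬ Secure p f A i :=
  no_secure_code_of_acyclic_general m n ℓ K W hacyc hwant A F Y p hp f hdec
end

section
/- (Theorem 2.) Let F be a finite field, and let G : Matrix (Fin m) (Fin ℓ) F and G̃ : Matrix (Fin k) (Fin ℓ) F define the random linear index code f x y = x ᵥ* G + y ᵥ* G̃ with key y uniform over Fin k → F. Suppose f is decodable for every receiver (K_i, W_i), i = 1,…,n, and satisfies the security condition (with uniform key) at (A, j) for every A ∈ 𝔄 and every j ∉ A. Then there exists a matrix Ĝ : Matrix (Fin m) (Fin ℓ) F such that the deterministic linear index code x ↦ x ᵥ* Ĝ is decodable for every receiver and satisfies the security condition at (A, j) for every A ∈ 𝔄 and every j ∉ A. (Random keys do not help for linear index codes: random secure linear index codes of codelength ℓ exist iff deterministic secure linear index codes of codelength ℓ exist.) -/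
open Matrix

/-- Security condition at `(A, i)` for the random linear index code
`(x, y) ↦ x ᵥ* G + y ᵥ* G̃` with key `y` uniform over `Fin k → F` (counting form, over
pairs `(x, y)`). -/
def RandLinSecure {m ℓ k : ℕ} {F : Type*} [Field F]
    (G : Matrix (Fin m) (Fin ℓ) F) (Gt : Matrix (Fin k) (Fin ℓ) F)
    (A : Finset (Fin m)) (i : Fin m) : Prop :=
  ∀ (c : Fin ℓ → F) (z : ↥A → F) (a b : F),
    Nat.card {xy : (Fin m → F) × (Fin k → F) //
        xy.1 ᵥ* G + xy.2 ᵥ* Gt = c ∧ (∀ j : ↥A, xy.1 j.1 = z j) ∧ xy.1 i = a} =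
    Nat.card {xy : (Fin m → F) × (Fin k → F) //
        xy.1 ᵥ* G + xy.2 ᵥ* Gt = c ∧ (∀ j : ↥A, xy.1 j.1 = z j) ∧ xy.1 i = b}

/-!
The key only ever contributes the subspace `V` spanned by the rows of `G̃`. For a fixed message
`x`, the keys `y` with `x ᵥ* G + y ᵥ* G̃ = c` form a coset of `ker G̃` when `c - x ᵥ* G ∈ V`
and are absent otherwise, so every count in the random security condition is `|ker G̃|` times
the corresponding count for the quotient code `x ↦ x ᵥ* G + V`. A projection `π` of `F^ℓ` with
kernel `V` gives the deterministic code `Ĝ = G π`: it identifies exactly the messages the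
quotient code identifies, hence is equally secure, and `π w - w ∈ V` lets a receiver decode
`x ᵥ* Ĝ` as the random codeword for a suitable key.
-/

/-- `DetSecure` for a code with an arbitrary alphabet, such as the quotient `F^ℓ / V`. -/
def CodeSecure {m : ℕ} {F C : Type*} (f : (Fin m → F) → C) (A : Finset (Fin m)) (i : Fin m) :
    Prop :=
  ∀ (c : C) (z : ↥A → F) (a b : F),
    Nat.card {x : Fin m → F // f x = c ∧ (∀ j : ↥A, x j.1 = z j) ∧ x i = a} =
    Nat.card {x : Fin m → F // f x = c ∧ (∀ j : ↥A, x j.1 = z j) ∧ x i = b}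

theorem CodeSecure.of_eq_iff_eq {m : ℕ} {F C D : Type*} {f : (Fin m → F) → C}
    {h : (Fin m → F) → D} {A : Finset (Fin m)} {i : Fin m} (hf : CodeSecure f A i)
    (hfh : ∀ x x', h x = h x' ↔ f x = f x') : CodeSecure h A i := by
  intro c z a b
  by_cases hc : ∃ x₀, h x₀ = c
  · obtain ⟨x₀, rfl⟩ := hc
    have hfib (a : F) :
        {x // h x = h x₀ ∧ (∀ j : ↥A, x j.1 = z j) ∧ x i = a} ≃
          {x // f x = f x₀ ∧ (∀ j : ↥A, x j.1 = z j) ∧ x i = a} :=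
      Equiv.subtypeEquivRight fun x => by rw [hfh]
    rw [Nat.card_congr (hfib a), Nat.card_congr (hfib b), hf]
  · have hempty (a : F) : IsEmpty {x // h x = c ∧ (∀ j : ↥A, x j.1 = z j) ∧ x i = a} :=
      ⟨fun x => hc ⟨x.1, x.2.1⟩⟩
    rw [Nat.card_of_isEmpty (α := {x // h x = c ∧ _ ∧ x i = a}),
      Nat.card_of_isEmpty (α := {x // h x = c ∧ _ ∧ x i = b})]

theorem AddMonoidHom.card_add_eq_mul_card_ker {X M N : Type*} [AddGroup M] [AddCommGroup N]
    (L : M →+ N) (g : X → N) (P : X → Prop) (c : N) :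
    Nat.card {p : X × M // g p.1 + L p.2 = c ∧ P p.1} =
      Nat.card {x : X // c - g x ∈ L.range ∧ P x} * Nat.card L.ker := by
  rw [← Nat.card_prod]
  refine Nat.card_congr (Equiv.trans ?_ (Equiv.sigmaEquivProdOfEquiv fun x =>
    (Equiv.setCongr (by rw [x.2.1.choose_spec])).trans (L.fiberEquivKer x.2.1.choose)))
  exact
    { toFun := fun p => ⟨⟨p.1.1, ⟨p.1.2, eq_sub_of_add_eq' p.2.1⟩, p.2.2⟩,
        ⟨p.1.2, eq_sub_of_add_eq' p.2.1⟩⟩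
      invFun := fun q => ⟨(q.1.1, q.2.1), add_eq_of_eq_sub' q.2.2, q.1.2.2⟩
      left_inv := fun _ => rfl
      right_inv := fun _ => rfl }

theorem randLinSecure_iff {m ℓ k : ℕ} {F : Type*} [Field F] [Finite F]
    {G : Matrix (Fin m) (Fin ℓ) F} {Gt : Matrix (Fin k) (Fin ℓ) F} {A : Finset (Fin m)}
    {i : Fin m} :
    RandLinSecure G Gt A i ↔
      CodeSecure (fun x => (LinearMap.range (vecMulLinear Gt)).mkQ (x ᵥ* G)) A i := by
  set V := LinearMap.range (vecMulLinear Gt)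
  set L := (vecMulLinear Gt).toAddMonoidHom
  have hcard (c : Fin ℓ → F) (z : ↥A → F) (a : F) :
      Nat.card {xy : (Fin m → F) × (Fin k → F) //
          xy.1 ᵥ* G + xy.2 ᵥ* Gt = c ∧ (∀ j : ↥A, xy.1 j.1 = z j) ∧ xy.1 i = a} =
        Nat.card {x : Fin m → F //
          V.mkQ (x ᵥ* G) = V.mkQ c ∧ (∀ j : ↥A, x j.1 = z j) ∧ x i = a} * Nat.card L.ker := by
    refine (L.card_add_eq_mul_card_ker (· ᵥ* G)
      (fun x => (∀ j : ↥A, x j.1 = z j) ∧ x i = a) c).trans ?_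
    congr 1
    refine Nat.card_congr (Equiv.subtypeEquivRight fun x => ?_)
    rw [Submodule.mkQ_apply, Submodule.mkQ_apply, Submodule.Quotient.eq, ← neg_mem_iff, neg_sub,
      ← Submodule.mem_toAddSubgroup, LinearMap.range_toAddSubgroup]
  have hker : 0 < Nat.card L.ker := Nat.card_pos
  simp only [RandLinSecure, CodeSecure, hcard, Nat.mul_left_inj hker.ne',
    (Submodule.mkQ_surjective V).forall]

theorem Submodule.exists_ker_eq_and_map_sub_mem {K E : Type*} [DivisionRing K] [AddCommGroup E]
    [Module K E] (V : Submodule K E) :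
    ∃ π : E →ₗ[K] E, LinearMap.ker π = V ∧ ∀ w, π w - w ∈ V := by
  obtain ⟨q, hq⟩ := V.exists_isCompl
  refine ⟨q.projection V hq.symm, ker_projection _, fun w => ?_⟩
  rw [← neg_sub, ← projection_eq_self_sub_projection hq.symm]
  exact V.neg_mem (projection_apply_mem _ w)

theorem Decodable.detDecodable_of_forall_exists {m ℓ : ℕ} {F Y : Type*}
    {f : (Fin m → F) → Y → (Fin ℓ → F)} {h : (Fin m → F) → (Fin ℓ → F)}
    {K W : Finset (Fin m)} (hf : Decodable f K W) (hfh : ∀ x, ∃ y, h x = f x y) :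
    DetDecodable h K W := by
  obtain ⟨g, hg⟩ := hf
  refine ⟨g, fun x => ?_⟩
  obtain ⟨y, hy⟩ := hfh x
  rw [hy, hg]

/-- **Theorem 2.** Random keys do not help for linear index codes: if the random linear
index code `(x, y) ↦ x ᵥ* G + y ᵥ* G̃` (key uniform) is decodable for every receiver and
secure at `(A, j)` for every `A ∈ 𝔄` and `j ∉ A`, then there is a deterministic linear
index code `x ↦ x ᵥ* Ĝ` of the same codelength with the same properties. -/
theorem deterministic_linear_of_random_linear_secure
    (m ℓ k n : ℕ) (F : Type*) [Field F] [Fintype F]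
    (G : Matrix (Fin m) (Fin ℓ) F) (Gt : Matrix (Fin k) (Fin ℓ) F)
    (K W : Fin n → Finset (Fin m)) (𝔄 : Set (Finset (Fin m)))
    (hdec : ∀ i, Decodable (fun x (y : Fin k → F) => x ᵥ* G + y ᵥ* Gt) (K i) (W i))
    (hsec : ∀ A ∈ 𝔄, ∀ j ∉ A, RandLinSecure G Gt A j) :
    ∃ Ghat : Matrix (Fin m) (Fin ℓ) F,
      (∀ i, DetDecodable (fun x => x ᵥ* Ghat) (K i) (W i)) ∧
      (∀ A ∈ 𝔄, ∀ j ∉ A, DetSecure (fun x => x ᵥ* Ghat) A j) := by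
  obtain ⟨π, hker, hsub⟩ := (LinearMap.range (vecMulLinear Gt)).exists_ker_eq_and_map_sub_mem
  have hGhat (x : Fin m → F) : x ᵥ* (G * (LinearMap.toMatrix' π)ᵀ) = π (x ᵥ* G) := by
    rw [← vecMul_vecMul, vecMul_transpose, LinearMap.toMatrix'_mulVec]
  refine ⟨G * (LinearMap.toMatrix' π)ᵀ, fun i => ?_, fun A hA j hj => ?_⟩
  · refine (hdec i).detDecodable_of_forall_exists fun x => ?_
    obtain ⟨y, hy⟩ := hsub (x ᵥ* G)
    rw [vecMulLinear_apply] at hy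
    exact ⟨y, by rw [hGhat, hy, add_sub_cancel]⟩
  · refine (randLinSecure_iff.mp (hsec A hA j hj)).of_eq_iff_eq fun x x' => ?_
    rw [hGhat, hGhat, Submodule.mkQ_apply, Submodule.mkQ_apply, Submodule.Quotient.eq,
      ← hker, LinearMap.mem_ker, map_sub, sub_eq_zero]
end

section
/- (Existence of linear decoders for random linear codes.) Let F be a field, G : Matrix (Fin m) (Fin ℓ) F, G̃ : Matrix (Fin k) (Fin ℓ) F, K ⊆ Fin m, and j ∈ Fin m. Suppose there exists a function g : (Fin ℓ → F) → ((K : Finset (Fin m)) → F) → F with g (x ᵥ* G + y ᵥ* G̃) (x|_K) = x j for all x : Fin m → F and y : Fin k → F. Then there exist vectors D : Fin ℓ → F and E : K → F such that x j = ⟨x ᵥ* G + y ᵥ* G̃, D⟩ + ⟨x|_K, E⟩ for all x and y, where ⟨·,·⟩ is the dot product; moreover, necessarily G̃ *ᵥ D = 0 (D lies in the nullspace of G̃). -/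
/-!
The pair (observation `x ᵥ* G + y ᵥ* G̃`, side information `x|_K`) is a linear function `L` of
`(x, y)`, and so is the target `x j`. If any function `g` recovers `x j` from `L (x, y)`, then `x j`
vanishes on `ker L`, so it factors through `L` by a linear functional on the codomain of `L`;
such a functional is a pair of dot products, giving `D` and `E`. Feeding `x = 0` into the
resulting identity shows `(y ᵥ* G̃) ⬝ᵥ D = 0` for all `y`, i.e. `G̃ *ᵥ D = 0`.
-/

open Matrix

namespace LinearMap

theorem ker_le_ker_of_forall_apply_eq {R V W M : Type*} [Ring R] [AddCommGroup V] [Module R V]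
    [AddCommGroup W] [Module R W] [AddCommGroup M] [Module R M]
    {L : V →ₗ[R] W} {f : V →ₗ[R] M} (g : W → M) (hg : ∀ v, g (L v) = f v) :
    ker L ≤ ker f := by
  intro v hv
  rw [mem_ker] at hv ⊢
  rw [← hg, hv, ← L.map_zero, hg, f.map_zero]

theorem exists_dual_comp_eq_of_ker_le {K V W : Type*} [Field K] [AddCommGroup V] [Module K V]
    [AddCommGroup W] [Module K W] {L : V →ₗ[K] W} {f : Module.Dual K V} (h : ker L ≤ ker f) :
    ∃ φ : Module.Dual K W, φ ∘ₗ L = f := by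
  have hf : f ∈ range L.dualMap := by
    rw [range_dualMap_eq_dualAnnihilator_ker, Submodule.mem_dualAnnihilator]
    exact fun v hv => h hv
  obtain ⟨φ, rfl⟩ := hf
  exact ⟨φ, rfl⟩

theorem exists_dotProduct_add_dotProduct {R ι κ : Type*} [CommSemiring R] [Fintype ι]
    [Fintype κ] (φ : Module.Dual R ((ι → R) × (κ → R))) :
    ∃ (D : ι → R) (E : κ → R), ∀ u v, φ (u, v) = u ⬝ᵥ D + v ⬝ᵥ E := by
  classical
  refine ⟨(dotProductEquiv R ι).symm (φ ∘ₗ inl R _ _),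
    (dotProductEquiv R κ).symm (φ ∘ₗ inr R _ _), fun u v => ?_⟩
  rw [dotProduct_comm u, dotProduct_comm v, ← dotProductEquiv_apply_apply,
    ← dotProductEquiv_apply_apply, LinearEquiv.apply_symm_apply, LinearEquiv.apply_symm_apply,
    comp_apply, comp_apply, ← map_add, inl_apply, inr_apply, Prod.mk_add_mk, add_zero, zero_add]

end LinearMap

theorem Matrix.mulVec_eq_zero_of_forall_vecMul_dotProduct {R m n : Type*} [CommSemiring R]
    [Fintype m] [Fintype n] {A : Matrix m n R} {D : n → R} (h : ∀ y, (y ᵥ* A) ⬝ᵥ D = 0) :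
    A *ᵥ D = 0 :=
  dotProduct_eq_zero _ fun y => by rw [dotProduct_comm, dotProduct_mulVec, h]

def decoderInput {F ι κ μ : Type*} [CommSemiring F] [Fintype ι] [Fintype κ]
    (G : Matrix ι μ F) (Gt : Matrix κ μ F) (K : Finset ι) :
    ((ι → F) × (κ → F)) →ₗ[F] (μ → F) × (K → F) :=
  ((vecMulLinear G).coprod (vecMulLinear Gt)).prod
    (LinearMap.funLeft F F Subtype.val ∘ₗ LinearMap.fst F _ _)

@[simp]
theorem decoderInput_apply {F ι κ μ : Type*} [CommSemiring F] [Fintype ι] [Fintype κ]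
    (G : Matrix ι μ F) (Gt : Matrix κ μ F) (K : Finset ι) (x : ι → F) (y : κ → F) :
    decoderInput G Gt K (x, y) = (x ᵥ* G + y ᵥ* Gt, fun t => x t.1) :=
  rfl

/-- **Existence of linear decoders for random linear codes.** If some (arbitrary) function
`g` recovers `x j` from `x ᵥ* G + y ᵥ* G̃` and `x|_K` for all `x, y`, then there are
vectors `D` and `E` with `x j = ⟨x ᵥ* G + y ᵥ* G̃, D⟩ + ⟨x|_K, E⟩` for all `x, y`;
moreover `D` necessarily lies in the nullspace of `G̃`, i.e. `G̃ *ᵥ D = 0`. -/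
theorem exists_linear_decoder
    (m ℓ k : ℕ) (F : Type*) [Field F]
    (G : Matrix (Fin m) (Fin ℓ) F) (Gt : Matrix (Fin k) (Fin ℓ) F)
    (K : Finset (Fin m)) (j : Fin m)
    (g : (Fin ℓ → F) → (↥K → F) → F)
    (hg : ∀ (x : Fin m → F) (y : Fin k → F),
      g (x ᵥ* G + y ᵥ* Gt) (fun t => x t.1) = x j) :
    ∃ (D : Fin ℓ → F) (E : ↥K → F),
      (∀ (x : Fin m → F) (y : Fin k → F),
        x j = (x ᵥ* G + y ᵥ* Gt) ⬝ᵥ D + ∑ t : ↥K, x t.1 * E t) ∧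
      Gt *ᵥ D = 0 := by
  have hker : LinearMap.ker (decoderInput G Gt K) ≤
      LinearMap.ker (LinearMap.proj j ∘ₗ LinearMap.fst F _ _) :=
    LinearMap.ker_le_ker_of_forall_apply_eq (fun w => g w.1 w.2) fun v => hg v.1 v.2
  obtain ⟨φ, hφ⟩ := LinearMap.exists_dual_comp_eq_of_ker_le hker
  obtain ⟨D, E, hDE⟩ := LinearMap.exists_dotProduct_add_dotProduct φ
  have hdecode : ∀ (x : Fin m → F) (y : Fin k → F),
      x j = (x ᵥ* G + y ᵥ* Gt) ⬝ᵥ D + ∑ t : ↥K, x t.1 * E t := fun x y => by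
    simpa [hDE, dotProduct] using (LinearMap.congr_fun hφ (x, y)).symm
  refine ⟨D, E, hdecode, Matrix.mulVec_eq_zero_of_forall_vecMul_dotProduct fun y => ?_⟩
  simpa using (hdecode 0 y).symm
end

section
/- (Constructive core of Proposition 8.) Let A ⊆ Fin m, and consider receivers (K_i, W_i), i = 1,…,n, with W_i \ K_i ≠ ∅, such that for every receiver i it is NOT the case that K_i ⊆ A and W_i \ A ≠ ∅. Then over any finite field F with |F| ≥ m there exist a length ℓ ≤ m and a deterministic index code f : (Fin m → F) → (Fin ℓ → F) that is decodable for every receiver and satisfies the security condition at (A, j) for every j ∉ A. (The code reveals x|_A in the clear and protects x|_{A^c} with an MDS-based linear code.) -/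
open Matrix

/-!
Fix a coordinate `k ∉ A`. The code reveals `x i` for `i ∈ A` and `x i - x k` for `i ∉ A`.
Adding the same constant to every coordinate outside `A` changes neither the codeword nor
`x|_A`, while it shifts any prescribed `x j` with `j ∉ A` arbitrarily; hence the
eavesdropper learns nothing about `x j`. A receiver that knows some coordinate outside `A`
recovers `x k` from the corresponding difference, and with it all of `x`; every other
receiver wants only coordinates in `A`, which are sent in the clear.
-/

section Criteria

variable {m ℓ : ℕ} {F : Type*}

lemma detDecodable_of_forall_eq [Nonempty F] {f : (Fin m → F) → (Fin ℓ → F)}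
    {K W : Finset (Fin m)}
    (h : ∀ x x', f x = f x' → (∀ j ∈ K, x j = x' j) → ∀ j ∈ W, x j = x' j) :
    DetDecodable f K W := by
  have hfac : Function.FactorsThrough (fun x (j : ↥W) => x j.1)
      (fun x => (f x, fun j : ↥K => x j.1)) := by
    intro x x' hxx'
    obtain ⟨hf, hK⟩ := Prod.ext_iff.mp hxx'
    funext j
    exact h x x' hf (fun i hi => congrFun hK ⟨i, hi⟩) j.1 j.2
  exact ⟨fun c k => Function.extend (fun x => (f x, fun j : ↥K => x j.1))
    (fun x (j : ↥W) => x j.1) (fun _ _ => Classical.arbitrary F) (c, k),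
    hfac.extend_apply _⟩

lemma detDecodable_id (K W : Finset (Fin m)) : DetDecodable (id : (Fin m → F) → _) K W :=
  ⟨fun c _ j => c j.1, fun _ => rfl⟩

/-- For `t = b - a`, the map `x ↦ x + v` is a bijection from the fibre over `x j = a` onto the
fibre over `x j = b`. -/
lemma detSecure_of_forall_exists_shift [AddCommGroup F] {f : (Fin m → F) → (Fin ℓ → F)}
    {A : Finset (Fin m)} {j : Fin m}
    (hshift : ∀ t : F, ∃ v : Fin m → F,
      (∀ i ∈ A, v i = 0) ∧ v j = t ∧ ∀ x, f (x + v) = f x) :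
    DetSecure f A j := by
  intro c z a b
  obtain ⟨v, hvA, hvj, hfv⟩ := hshift (b - a)
  refine Nat.card_congr (Equiv.subtypeEquiv (Equiv.addRight v) fun x => ?_)
  simp only [Equiv.coe_addRight, hfv, Pi.add_apply, hvj, hvA _ (Subtype.prop _), add_zero,
    ← eq_sub_iff_add_eq, sub_sub_cancel]

end Criteria

section AnchorDiffCode

variable {m : ℕ} {F : Type*} [AddCommGroup F]

def anchorDiffCode (A : Finset (Fin m)) (k : Fin m) (x : Fin m → F) : Fin m → F :=
  fun i => if i ∈ A then x i else x i - x k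

variable {A : Finset (Fin m)} {k : Fin m}

lemma anchorDiffCode_add_const_on_compl {t : F} (hk : k ∉ A) (x : Fin m → F) :
    anchorDiffCode A k (x + fun i => if i ∈ A then 0 else t) = anchorDiffCode A k x := by
  funext i
  by_cases hi : i ∈ A <;> simp [anchorDiffCode, hi, hk]

lemma apply_eq_of_anchorDiffCode_eq {x x' : Fin m → F}
    (h : anchorDiffCode A k x = anchorDiffCode A k x') {i : Fin m} (hi : i ∈ A) :
    x i = x' i := by
  simpa [anchorDiffCode, hi] using congrFun h i

lemma sub_anchor_eq_of_anchorDiffCode_eq {x x' : Fin m → F}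
    (h : anchorDiffCode A k x = anchorDiffCode A k x') {i : Fin m} (hi : i ∉ A) :
    x i - x k = x' i - x' k := by
  simpa [anchorDiffCode, hi] using congrFun h i

lemma eq_of_anchorDiffCode_eq_of_apply_eq {x x' : Fin m → F}
    (h : anchorDiffCode A k x = anchorDiffCode A k x') {i : Fin m} (hi : i ∉ A)
    (hxi : x i = x' i) : x = x' := by
  have hxk : x k = x' k := by
    have hdiff := sub_anchor_eq_of_anchorDiffCode_eq h hi
    rw [hxi] at hdiff
    exact sub_right_injective hdiff
  funext j
  by_cases hj : j ∈ A
  · exact apply_eq_of_anchorDiffCode_eq h hj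
  · simpa [hxk] using sub_anchor_eq_of_anchorDiffCode_eq h hj

lemma detDecodable_anchorDiffCode {K W : Finset (Fin m)} (h : ¬ (K ⊆ A ∧ (W \ A).Nonempty)) :
    DetDecodable (anchorDiffCode A k : (Fin m → F) → _) K W := by
  apply detDecodable_of_forall_eq
  intro x x' hxx' hK j hj
  by_cases hKA : K ⊆ A
  · have hWA : W ⊆ A := by simpa [Finset.sdiff_eq_empty_iff_subset] using not_and.mp h hKA
    exact apply_eq_of_anchorDiffCode_eq hxx' (hWA hj)
  · obtain ⟨i, hiK, hiA⟩ := Finset.not_subset.mp hKA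
    rw [eq_of_anchorDiffCode_eq_of_apply_eq hxx' hiA (hK i hiK)]

lemma detSecure_anchorDiffCode (hk : k ∉ A) {j : Fin m} (hj : j ∉ A) :
    DetSecure (anchorDiffCode A k : (Fin m → F) → _) A j :=
  detSecure_of_forall_exists_shift fun t =>
    ⟨fun i => if i ∈ A then 0 else t, fun _ hi => if_pos hi, if_neg hj,
      anchorDiffCode_add_const_on_compl hk⟩

end AnchorDiffCode

theorem exists_det_secure_code_single_eavesdropper_set_general
    (m n : ℕ) (A : Finset (Fin m)) (K W : Fin n → Finset (Fin m))
    (htype : ∀ i, ¬ (K i ⊆ A ∧ (W i \ A).Nonempty))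
    (F : Type*) [Field F] :
    ∃ ℓ : ℕ, ℓ ≤ m ∧
      ∃ f : (Fin m → F) → (Fin ℓ → F),
        (∀ i, DetDecodable f (K i) (W i)) ∧
        (∀ j ∉ A, DetSecure f A j) := by
  by_cases hA : ∃ k, k ∉ A
  · obtain ⟨k, hk⟩ := hA
    exact ⟨m, le_rfl, anchorDiffCode A k, fun i => detDecodable_anchorDiffCode (htype i),
      fun j hj => detSecure_anchorDiffCode hk hj⟩
  · push Not at hA
    exact ⟨m, le_rfl, id, fun i => detDecodable_id _ _, fun j hj => absurd (hA j) hj⟩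

/-- **Constructive core of Proposition 8.** Suppose every receiver wants something it does
not know, and no receiver `i` satisfies `K i ⊆ A` and `W i \ A ≠ ∅`. Then over any finite
field `F` with `|F| ≥ m` there are a length `ℓ ≤ m` and a deterministic index code of
length `ℓ` that is decodable for every receiver and secure at `(A, j)` for every
`j ∉ A`. -/
theorem exists_det_secure_code_single_eavesdropper_set
    (m n : ℕ) (A : Finset (Fin m)) (K W : Fin n → Finset (Fin m))
    (hWK : ∀ i, (W i \ K i).Nonempty)
    (htype : ∀ i, ¬ (K i ⊆ A ∧ (W i \ A).Nonempty))
    (F : Type*) [Field F] [Fintype F] (hF : m ≤ Fintype.card F) :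
    ∃ ℓ : ℕ, ℓ ≤ m ∧
      ∃ f : (Fin m → F) → (Fin ℓ → F),
        (∀ i, DetDecodable f (K i) (W i)) ∧
        (∀ j ∉ A, DetSecure f A j) :=
  exists_det_secure_code_single_eavesdropper_set_general m n A K W htype F
end

section
/- (Proposition 1, first code.) Let F be a finite field with |F| ≥ 2 and m = 4. The deterministic index code f x = (x₀ + x₁, x₂ + x₃) of length 2 satisfies the security condition at (A, i) for A = {2, 3} and each i ∈ {0, 1}, but fails the security condition at (A', 3) for A' = {2}: indeed x₃ is a function of f x and x₂. (An index code secure against an eavesdropper knowing X_A need not be secure against one knowing X_{A'} with A' ⊊ A.) -/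
open Matrix

/-!
The code is linear. Moving along `e₀ - e₁` leaves `f` and `x₂, x₃` unchanged but shifts `x₀`
(and `x₁`), so the fibres over each value of `x₀` (or `x₁`) are translates of each other and have
the same size. Knowing only `x₂`, on the other hand, `x₃ = f₁ - x₂` is pinned down, so over a value
of `x₃` other than the true one the fibre is empty while the fibre over the true value is not.
-/

section

variable {m ℓ : ℕ} {F : Type*}

theorem detSecure_of_map_add_smul_eq [Field F] {f : (Fin m → F) → (Fin ℓ → F)}
    {A : Finset (Fin m)} {i : Fin m} (v : Fin m → F) (hf : ∀ x (t : F), f (x + t • v) = f x)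
    (hA : ∀ j ∈ A, v j = 0) (hi : v i ≠ 0) : DetSecure f A i := by
  intro c z a b
  have hshift : (b - a) / v i * v i = b - a := div_mul_cancel₀ _ hi
  refine Nat.card_congr (Equiv.subtypeEquiv (Equiv.addRight (((b - a) / v i) • v)) fun x => ?_)
  simp only [Equiv.coe_addRight, hf, Pi.add_apply, Pi.smul_apply, smul_eq_mul, hshift]
  refine and_congr_right fun _ => and_congr (forall_congr' fun j => ?_) ?_
  · rw [hA j j.2, mul_zero, add_zero]
  · rw [← eq_sub_iff_add_eq, sub_sub_cancel]

theorem not_detSecure_of_determined [Field F] [Finite F] {f : (Fin m → F) → (Fin ℓ → F)}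
    {A : Finset (Fin m)} {i : Fin m}
    (hdet : ∀ x x' : Fin m → F, f x = f x' → (∀ j ∈ A, x j = x' j) → x i = x' i) :
    ¬ DetSecure f A i := by
  intro hsec
  obtain ⟨b, hb⟩ := exists_ne (0 : F)
  have hfibre_zero : 0 < Nat.card {x : Fin m → F // f x = f 0 ∧ (∀ j : ↥A, x j.1 = 0) ∧ x i = 0} :=
    Nat.card_pos_iff.2 ⟨⟨⟨0, rfl, fun _ => rfl, rfl⟩⟩, inferInstance⟩
  have hfibre_b : IsEmpty {x : Fin m → F // f x = f 0 ∧ (∀ j : ↥A, x j.1 = 0) ∧ x i = b} :=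
    ⟨fun ⟨x, hfx, hxA, hxi⟩ => hb (hxi ▸ hdet x 0 hfx fun j hj => hxA ⟨j, hj⟩)⟩
  rw [hsec (f 0) (fun _ => 0) 0 b, Nat.card_of_isEmpty] at hfibre_zero
  exact hfibre_zero.false

end

theorem proposition1_first_code_general
    (F : Type*) [Field F] [Fintype F] :
    let f : (Fin 4 → F) → (Fin 2 → F) := fun x => ![x 0 + x 1, x 2 + x 3]
    (∀ i ∈ ({0, 1} : Finset (Fin 4)), DetSecure f ({2, 3} : Finset (Fin 4)) i) ∧
    ¬ DetSecure f ({2} : Finset (Fin 4)) 3 ∧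
    (∀ x x' : Fin 4 → F, f x = f x' → x 2 = x' 2 → x 3 = x' 3) := by
  intro f
  have hdet : ∀ x x' : Fin 4 → F, f x = f x' → x 2 = x' 2 → x 3 = x' 3 := by
    intro x x' hf h2
    have h1 := congrFun hf 1
    simp only [f, cons_val_one, cons_val_zero] at h1
    linear_combination h1 - h2
  have hinv : ∀ x (t : F), f (x + t • ![1, -1, 0, 0]) = f x := by
    intro x t
    simp only [f, Pi.add_apply, Pi.smul_apply, smul_eq_mul, cons_val, mul_one, mul_neg, mul_zero,
      add_zero]
    ring_nf
  refine ⟨fun i hi => detSecure_of_map_add_smul_eq ![1, -1, 0, 0] hinv ?_ ?_,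
    not_detSecure_of_determined fun x x' hf hA => hdet x x' hf (hA 2 (Finset.mem_singleton_self 2)),
    hdet⟩
  · simp
  · fin_cases hi <;> simp

/-- **Proposition 1 (first code).** The code `f x = (x₀ + x₁, x₂ + x₃)` on four messages
is secure at `({2, 3}, i)` for `i ∈ {0, 1}`, but insecure at `({2}, 3)`: indeed `x₃` is a
function of `f x` and `x₂`. -/
theorem proposition1_first_code
    (F : Type*) [Field F] [Fintype F] (hF : 2 ≤ Fintype.card F) :
    let f : (Fin 4 → F) → (Fin 2 → F) := fun x => ![x 0 + x 1, x 2 + x 3]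
    (∀ i ∈ ({0, 1} : Finset (Fin 4)), DetSecure f ({2, 3} : Finset (Fin 4)) i) ∧
    ¬ DetSecure f ({2} : Finset (Fin 4)) 3 ∧
    (∀ x x' : Fin 4 → F, f x = f x' → x 2 = x' 2 → x 3 = x' 3) :=
  proposition1_first_code_general F
end
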